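/- arXiv:1602.08635 — 7 statements merged into one kernel-verified Lean document; each statement's English description precedes it below -/
import Mathlib

section
/- Ping-pong lemma for right-angled Artin groups: Let Γ be a finite simple graph with vertices v₁,…,vₙ and let A_Γ be the associated right-angled Artin group with generators g₁,…,gₙ (with relations g_i g_j = g_j g_i whenever {v_i,v_j} is an edge). Suppose A_Γ acts on a set X, and there exist subsets S₁⁺,…,Sₙ⁺ and S₁⁻,…,Sₙ⁻ of X with S_i = S_i⁺ ∪ S_i⁻ satisfying: (1) g_i(S_i⁺) ⊆ S_i⁺ and g_i⁻¹(S_i⁻) ⊆ S_i⁻ for all i; (2) if g_i and g_j commute in A_Γ (i ≠ j), then g_i(S_j) = S_j; (3) if g_i and g_j do not commute, then g_i(S_j) ⊆ S_i⁺ and g_i⁻¹(S_j) ⊆ S_i⁻; (4) there is a point x ∈ X \ ⋃ᵢ S_i with g_i(x) ∈ S_i⁺ and g_i⁻¹(x) ∈ S_i⁻ for all i. Then the action of A_Γ on X is faithful. -/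
/-- Relators of a right-angled Artin group: commutators of adjacent generators. -/
def raagRels {V : Type*} (G : SimpleGraph V) : Set (FreeGroup V) :=
  {r | ∃ i j, G.Adj i j ∧
    r = FreeGroup.of i * FreeGroup.of j * (FreeGroup.of i)⁻¹ * (FreeGroup.of j)⁻¹}

/-- The right-angled Artin group of a simple graph. -/
def RAAG {V : Type*} (G : SimpleGraph V) := PresentedGroup (raagRels G)

noncomputable instance {V : Type*} (G : SimpleGraph V) : Group (RAAG G) := by
  unfold RAAG; infer_instance

/-- The standard generators of a right-angled Artin group. -/
def raagGen {V : Type*} (G : SimpleGraph V) (v : V) : RAAG G :=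
  PresentedGroup.of v

namespace RaagPingPong

variable {n : ℕ} {G : SimpleGraph (Fin n)}

/-- The natural projection from the free group. -/
noncomputable def pim (G : SimpleGraph (Fin n)) : FreeGroup (Fin n) →* RAAG G :=
  PresentedGroup.mk (raagRels G)

lemma pim_surjective : Function.Surjective (pim G) :=
  PresentedGroup.mk_surjective (raagRels G)

lemma pim_of (i : Fin n) : pim G (FreeGroup.of i) = raagGen G i := rfl

/-- Minimal word length of an element of the RAAG. -/
noncomputable def len (g : RAAG G) : ℕ :=
  sInf (FreeGroup.norm '' (pim G ⁻¹' {g}))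

lemma len_exists (g : RAAG G) : ∃ w, pim G w = g ∧ w.norm = len g := by
  have hne : (FreeGroup.norm '' (pim G ⁻¹' {g})).Nonempty := by
    obtain ⟨w, hw⟩ := pim_surjective (G := G) g
    exact ⟨w.norm, ⟨w, hw, rfl⟩⟩
  obtain ⟨w, hw, hn⟩ := Nat.sInf_mem hne
  exact ⟨w, hw, hn⟩

lemma len_le {g : RAAG G} {w : FreeGroup (Fin n)} (hw : pim G w = g) :
    len g ≤ w.norm :=
  Nat.sInf_le ⟨w, hw, rfl⟩

lemma eq_one_of_len_eq_zero {g : RAAG G} (h : len g = 0) : g = 1 := by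
  obtain ⟨w, hw, hn⟩ := len_exists g
  rw [h, FreeGroup.norm_eq_zero] at hn
  rw [← hw, hn, map_one]

lemma len_mul_le (a b : RAAG G) : len (a * b) ≤ len a + len b := by
  obtain ⟨u, hu, hnu⟩ := len_exists a
  obtain ⟨v, hv, hnv⟩ := len_exists b
  calc len (a * b) ≤ (u * v).norm := len_le (by rw [map_mul, hu, hv])
    _ ≤ u.norm + v.norm := FreeGroup.norm_mul_le u v
    _ = len a + len b := by rw [hnu, hnv]

/-- A signed generator as an element of the RAAG. -/
noncomputable def gl (G : SimpleGraph (Fin n)) (p : Fin n × Bool) : RAAG G :=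
  if p.2 then raagGen G p.1 else (raagGen G p.1)⁻¹

lemma pim_single (p : Fin n × Bool) : pim G (FreeGroup.mk [p]) = gl G p := by
  obtain ⟨i, b⟩ := p
  cases b
  · have h1 : (FreeGroup.mk [(i, false)] : FreeGroup (Fin n)) = (FreeGroup.of i)⁻¹ := by
      rw [show (FreeGroup.of i : FreeGroup (Fin n)) = FreeGroup.mk [(i, true)] from rfl,
        FreeGroup.inv_mk]
      rfl
    rw [h1, map_inv, pim_of]; rfl
  · rw [show (FreeGroup.mk [(i, true)] : FreeGroup (Fin n)) = FreeGroup.of i from rfl, pim_of]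
    rfl

lemma len_gl_le (p : Fin n × Bool) : len (gl G p) ≤ 1 := by
  have := len_le (pim_single (G := G) p)
  calc len (gl G p) ≤ (FreeGroup.mk [p]).norm := this
    _ ≤ [p].length := FreeGroup.norm_mk_le
    _ = 1 := rfl

lemma gl_neg (i : Fin n) (b : Bool) : gl G (i, !b) = (gl G (i, b))⁻¹ := by
  cases b <;> simp [gl]

lemma exists_front {g : RAAG G} (hg : g ≠ 1) :
    ∃ p : Fin n × Bool, len ((gl G p)⁻¹ * g) < len g := by
  obtain ⟨w, hw, hn⟩ := len_exists g
  have hwne : w.toWord ≠ [] := by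
    intro h
    exact hg (by rw [← hw, FreeGroup.toWord_eq_nil_iff.mp h, map_one])
  obtain ⟨p, t, ht⟩ := List.exists_cons_of_ne_nil hwne
  refine ⟨p, ?_⟩
  have hsplit : FreeGroup.mk [p] * FreeGroup.mk t = w := by
    rw [FreeGroup.mul_mk, List.singleton_append, ← ht, FreeGroup.mk_toWord]
  have hkey : (gl G p)⁻¹ * g = pim G (FreeGroup.mk t) := by
    rw [← pim_single, ← hw, ← hsplit, map_mul]
    group
  have hlt : (FreeGroup.mk t : FreeGroup (Fin n)).norm < len g := by
    calc (FreeGroup.mk t : FreeGroup (Fin n)).norm ≤ t.length := FreeGroup.norm_mk_le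
      _ < t.length + 1 := Nat.lt_succ_self _
      _ = w.toWord.length := by rw [ht]; rfl
      _ = len g := hn
  calc len ((gl G p)⁻¹ * g) ≤ (FreeGroup.mk t : FreeGroup (Fin n)).norm := by
        rw [hkey]; exact len_le rfl
    _ < len g := hlt

end RaagPingPong

open RaagPingPong in
/-- Ping-pong lemma for right-angled Artin groups. -/
theorem raag_ping_pong {n : ℕ} (G : SimpleGraph (Fin n)) {X : Type*}
    (φ : RAAG G →* Equiv.Perm X)
    (Sp Sm S : Fin n → Set X) (hS : ∀ i, S i = Sp i ∪ Sm i)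
    (h1 : ∀ i, ⇑(φ (raagGen G i)) '' Sp i ⊆ Sp i ∧
      ⇑(φ (raagGen G i))⁻¹ '' Sm i ⊆ Sm i)
    (h2 : ∀ i j, i ≠ j → Commute (raagGen G i) (raagGen G j) →
      ⇑(φ (raagGen G i)) '' S j = S j)
    (h3 : ∀ i j, ¬ Commute (raagGen G i) (raagGen G j) →
      ⇑(φ (raagGen G i)) '' S j ⊆ Sp i ∧ ⇑(φ (raagGen G i))⁻¹ '' S j ⊆ Sm i)
    (h4 : ∃ x, x ∉ (⋃ i, S i) ∧ ∀ i,
      φ (raagGen G i) x ∈ Sp i ∧ (φ (raagGen G i))⁻¹ x ∈ Sm i) :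
    Function.Injective φ := by
  obtain ⟨x, hx0, hx4⟩ := h4
  -- signed target set of a letter
  set sg : Fin n × Bool → Set X := fun p => if p.2 then Sp p.1 else Sm p.1 with hsg
  have sg_sub : ∀ p : Fin n × Bool, sg p ⊆ S p.1 := by
    rintro ⟨i, b⟩
    cases b <;> simp only [hsg, if_pos, if_neg, Bool.false_eq_true, Bool.true_eq_false] <;>
      rw [hS i]
    · exact Set.subset_union_right
    · exact Set.subset_union_left
  -- basic action facts for signed letters
  have keyX : ∀ p : Fin n × Bool, φ (gl G p) x ∈ sg p := by
    rintro ⟨i, b⟩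
    cases b
    · show φ ((raagGen G i)⁻¹) x ∈ Sm i
      rw [map_inv]
      exact (hx4 i).2
    · exact (hx4 i).1
  have keyA : ∀ p : Fin n × Bool, ∀ y ∈ sg p, φ (gl G p) y ∈ sg p := by
    rintro ⟨i, b⟩ y hy
    cases b
    · show φ ((raagGen G i)⁻¹) y ∈ Sm i
      rw [map_inv]
      exact (h1 i).2 ⟨y, hy, rfl⟩
    · exact (h1 i).1 ⟨y, hy, rfl⟩
  have keyC : ∀ (i j : Fin n) (b : Bool), i ≠ j → Commute (raagGen G i) (raagGen G j) →
      ∀ y ∈ S j, φ (gl G (i, b)) y ∈ S j := by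
    intro i j b hij hc y hy
    have him := h2 i j hij hc
    cases b
    · show φ ((raagGen G i)⁻¹) y ∈ S j
      rw [map_inv]
      rw [← him] at hy
      obtain ⟨z, hz, hzy⟩ := hy
      have : (φ (raagGen G i))⁻¹ y = z := by rw [← hzy]; exact Equiv.symm_apply_apply _ z
      rw [this]; exact hz
    · rw [← him]; exact ⟨y, hy, rfl⟩
  have keyN : ∀ (i j : Fin n) (b : Bool), ¬ Commute (raagGen G i) (raagGen G j) →
      ∀ y ∈ S j, φ (gl G (i, b)) y ∈ sg (i, b) := by
    intro i j b hnc y hy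
    cases b
    · show φ ((raagGen G i)⁻¹) y ∈ Sm i
      rw [map_inv]
      exact (h3 i j hnc).2 ⟨y, hy, rfl⟩
    · exact (h3 i j hnc).1 ⟨y, hy, rfl⟩
  -- the core ping-pong induction
  have core : ∀ N : ℕ, ∀ g : RAAG G, len g ≤ N → g ≠ 1 →
      ∀ p : Fin n × Bool, len ((gl G p)⁻¹ * g) < len g →
      (φ g x ∈ S p.1 ∧
        ((∀ q : Fin n × Bool, len ((gl G q)⁻¹ * g) < len g → q = p) → φ g x ∈ sg p)) := by
    intro N
    induction N with
    | zero =>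
      intro g hgN hg p _
      exact absurd (eq_one_of_len_eq_zero (Nat.le_zero.mp hgN)) hg
    | succ N ih =>
      intro g hgN hg p hp
      set h : RAAG G := (gl G p)⁻¹ * g with hhdef
      have hgh : g = gl G p * h := by rw [hhdef]; group
      have hlen1 : len g ≤ len h + 1 := by
        calc len g = len (gl G p * h) := by rw [← hgh]
          _ ≤ len (gl G p) + len h := len_mul_le _ _
          _ ≤ 1 + len h := by have := len_gl_le (G := G) p; omega
          _ = len h + 1 := by omega
      have hlen : len h + 1 = len g := by omega
      have happ : φ g x = φ (gl G p) (φ h x) := by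
        rw [hgh, map_mul]; rfl
      by_cases hh1 : h = 1
      · -- g is a single letter
        rw [hh1, map_one] at happ
        have : φ g x ∈ sg p := by rw [happ]; exact keyX p
        exact ⟨sg_sub p this, fun _ => this⟩
      · have hhN : len h ≤ N := by omega
        have hhpos : 1 ≤ len h := by
          rcases Nat.eq_zero_or_pos (len h) with h0 | h0
          · exact absurd (eq_one_of_len_eq_zero h0) hh1
          · exact h0
        by_cases hex : ∃ q : Fin n × Bool, q.1 ≠ p.1 ∧ len ((gl G q)⁻¹ * h) < len h
        · obtain ⟨q, hq1, hq2⟩ := hex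
          by_cases hc : Commute (raagGen G p.1) (raagGen G q.1)
          · -- commuting front letters: reorder
            have hcl : Commute (gl G p) (gl G q) := by
              obtain ⟨i, b⟩ := p; obtain ⟨j, c⟩ := q
              have : Commute (raagGen G i) (raagGen G j) := hc
              cases b <;> cases c <;>
                simp only [gl, if_pos, if_neg, Bool.false_eq_true, Bool.true_eq_false,
                  ite_true, ite_false] <;>
                first
                  | exact this
                  | exact this.inv_left
                  | exact this.inv_right
                  | exact (this.inv_left).inv_right
            set h' : RAAG G := (gl G q)⁻¹ * h with hh'def
            set k : RAAG G := gl G p * h' with hkdef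
            have hgk : g = gl G q * k := by
              have hh2 : h = gl G q * h' := by rw [hh'def]; group
              rw [hgh, hh2, hkdef, ← mul_assoc, hcl.eq, mul_assoc]
            have hlen2 : len h ≤ len h' + 1 := by
              have : h = gl G q * h' := by rw [hh'def]; group
              calc len h = len (gl G q * h') := by rw [← this]
                _ ≤ len (gl G q) + len h' := len_mul_le _ _
                _ ≤ 1 + len h' := by have := len_gl_le (G := G) q; omega
                _ = len h' + 1 := by omega
            have hlenh' : len h' + 1 = len h := by omega
            have hklen : len k ≤ len h := by
              calc len k ≤ len (gl G p) + len h' := len_mul_le _ _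
                _ ≤ 1 + len h' := by have := len_gl_le (G := G) p; omega
                _ = len h := by omega
            have hkgl : (gl G q)⁻¹ * g = k := by rw [hgk]; group
            have hklen2 : len g ≤ len k + 1 := by
              calc len g = len (gl G q * k) := by rw [← hgk]
                _ ≤ len (gl G q) + len k := len_mul_le _ _
                _ ≤ 1 + len k := by have := len_gl_le (G := G) q; omega
                _ = len k + 1 := by omega
            have hklen3 : len k = len h := by omega
            have hkne : k ≠ 1 := by
              intro hk
              rw [hk] at hklen3
              have : len (1 : RAAG G) = 0 := by
                have := len_le (G := G) (w := 1) (map_one _)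
                simpa using this
              omega
            have hkfront : len ((gl G p)⁻¹ * k) < len k := by
              have : (gl G p)⁻¹ * k = h' := by rw [hkdef]; group
              rw [this]; omega
            have hkN : len k ≤ N := by omega
            have hkx : φ k x ∈ S p.1 := (ih k hkN hkne p hkfront).1
            have hgx : φ g x ∈ S p.1 := by
              have : φ g x = φ (gl G q) (φ k x) := by rw [hgk, map_mul]; rfl
              rw [this]
              obtain ⟨j, c⟩ := q
              exact keyC j p.1 c hq1 (Commute.symm hc) _ hkx
            refine ⟨hgx, fun huniq => ?_⟩
            exfalso
            have : q = p := huniq q (by rw [hkgl]; omega)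
            exact hq1 (by rw [this])
          · -- non-commuting front letter of h
            have hhx : φ h x ∈ S q.1 := (ih h hhN hh1 q hq2).1
            have : φ g x ∈ sg p := by
              rw [happ]
              obtain ⟨i, b⟩ := p
              exact keyN i q.1 b hc _ hhx
            exact ⟨sg_sub p this, fun _ => this⟩
        · -- all front letters of h equal p
          push_neg at hex
          have huniq_h : ∀ q : Fin n × Bool, len ((gl G q)⁻¹ * h) < len h → q = p := by
            intro q hq
            have hq1 : q.1 = p.1 := by
              by_contra hne
              have := hex q hne
              omega
            have hq2 : q.2 = p.2 := by
              by_contra hne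
              have hb : q.2 = !p.2 := by
                cases hqb : q.2 <;> cases hpb : p.2 <;> simp only [Bool.not_true,
                  Bool.not_false] <;> first | rfl | (exfalso; rw [hqb, hpb] at hne; exact hne rfl)
              have hqe : q = (p.1, !p.2) := Prod.ext hq1 hb
              rw [hqe, gl_neg p.1 p.2] at hq
              have hgl : gl G (p.1, p.2) = gl G p := rfl
              rw [inv_inv, hgl, ← hgh] at hq
              omega
            exact Prod.ext hq1 hq2
          obtain ⟨q0, hq0⟩ := exists_front hh1
          have hq0p : q0 = p := huniq_h q0 hq0
          rw [hq0p] at hq0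
          have hhx : φ h x ∈ sg p := (ih h hhN hh1 p hq0).2 huniq_h
          have : φ g x ∈ sg p := by
            rw [happ]
            exact keyA p _ hhx
          exact ⟨sg_sub p this, fun _ => this⟩
  -- conclude injectivity
  rw [injective_iff_map_eq_one]
  intro g hg1
  by_contra hgne
  obtain ⟨p, hp⟩ := exists_front hgne
  have hmem : φ g x ∈ S p.1 := (core (len g) g le_rfl hgne p hp).1
  rw [hg1] at hmem
  simp only [Equiv.Perm.coe_one, id_eq] at hmem
  exact hx0 (Set.mem_iUnion.mpr ⟨p.1, hmem⟩)
end

section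
/- Krasner–Kaloujnine embedding theorem: Let 1 → N → G → Q → 1 be a group extension (i.e., N is a normal subgroup of G with quotient Q). Then G embeds isomorphically into the unrestricted wreath product N Wr Q = (∏_{q∈Q} N) ⋊ Q, where Q acts on ∏_{q∈Q} N by permuting coordinates via left translation. -/
/-- `Q` acts on `∏_{q ∈ Q} N` by permuting coordinates via left translation. -/
def leftTransAut (N Q : Type*) [Group N] [Group Q] :
    Q →* MulAut (∀ _ : Q, N) where
  toFun q :=
    { toFun := fun f r => f (q⁻¹ * r)
      invFun := fun f r => f (q * r)
      left_inv := fun f => by funext r; simp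
      right_inv := fun f => by funext r; simp
      map_mul' := fun f g => rfl }
  map_one' := by ext f r; simp
  map_mul' := fun q q' => by ext f r; simp [mul_assoc]

/-- The unrestricted wreath product `N Wr Q = (∏_{q ∈ Q} N) ⋊ Q`, with `Q`
acting by left translation of coordinates. -/
def UnrestrictedWreath (N Q : Type*) [Group N] [Group Q] :=
  (∀ _ : Q, N) ⋊[leftTransAut N Q] Q

instance (N Q : Type*) [Group N] [Group Q] : Group (UnrestrictedWreath N Q) := by
  unfold UnrestrictedWreath; infer_instance

/-- Krasner–Kaloujnine: any extension `1 → N → G → Q → 1` embeds into `N Wr Q`. -/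
theorem krasner_kaloujnine {G : Type*} [Group G] (N : Subgroup G) [N.Normal] :
    ∃ φ : G →* UnrestrictedWreath N (G ⧸ N), Function.Injective φ := by
  classical
  set π : G →* G ⧸ N := QuotientGroup.mk' N with hπ
  let s : G ⧸ N → G := Quotient.out
  have hs : ∀ q : G ⧸ N, π (s q) = q := fun q => QuotientGroup.out_eq' q
  have mem : ∀ (g : G) (r : G ⧸ N), (s r)⁻¹ * g * s ((π g)⁻¹ * r) ∈ N := by
    intro g r
    refine (QuotientGroup.eq_one_iff _).mp ?_
    show π _ = 1
    rw [map_mul, map_mul, map_inv, hs, hs]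
    group
  let fn : G → ∀ _ : G ⧸ N, N := fun g r => ⟨(s r)⁻¹ * g * s ((π g)⁻¹ * r), mem g r⟩
  have key : ∀ g h : G, fn g * (leftTransAut (↥N) (G ⧸ N) (π g)) (fn h) = fn (g * h) := by
    intro g h
    funext r
    apply Subtype.ext
    show ((s r)⁻¹ * g * s ((π g)⁻¹ * r)) *
      ((s ((π g)⁻¹ * r))⁻¹ * h * s ((π h)⁻¹ * ((π g)⁻¹ * r))) = _
    show _ = (s r)⁻¹ * (g * h) * s ((π (g * h))⁻¹ * r)
    rw [map_mul, mul_inv_rev, mul_assoc (π h)⁻¹]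
    group
  refine ⟨{ toFun := fun g => (⟨fn g, π g⟩ : (∀ _ : G ⧸ N, N) ⋊[leftTransAut (↥N) (G ⧸ N)] (G ⧸ N))
            map_one' := ?_
            map_mul' := ?_ }, ?_⟩
  · refine SemidirectProduct.ext ?_ rfl
    funext r
    apply Subtype.ext
    show (s r)⁻¹ * 1 * s ((π 1)⁻¹ * r) = 1
    simp
  · intro g h
    refine SemidirectProduct.ext ?_ (map_mul π g h)
    exact (key g h).symm
  · rw [injective_iff_map_eq_one]
    intro g hg
    have h1 : fn g = 1 := congrArg SemidirectProduct.left hg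
    have h2 : π g = 1 := congrArg SemidirectProduct.right hg
    have := congrFun h1 1
    have h3 : (s 1)⁻¹ * g * s ((π g)⁻¹ * 1) = 1 := congrArg Subtype.val this
    rw [h2] at h3
    simp only [inv_one, one_mul] at h3
    have h4 : (s 1)⁻¹ * g = (s 1)⁻¹ := by
      rw [mul_eq_one_iff_eq_inv] at h3; simpa using h3
    exact mul_left_cancel (h4.trans (mul_one _).symm)
end

section
/- Let X be a topological space, K a group of homeomorphisms of X that acts with local realisation, and G a demonstrable group for K with demonstrative embedding Ĝ ≤ K and demonstration open set U. Then the restricted wreath product K ≀ G = (⊕_{g∈G} K) ⋊ G embeds isomorphically into K. -/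
/-!
Transport the local copy `K_U ≅ K` along the demonstrative embedding: for `g ∈ G` let `c_g` be
`K_U` conjugated by `ĝ`, a copy of `K` supported on `U·ĝ`. These translates are pairwise
disjoint, so the copies commute and a finitely supported `f : G → K` maps to the (finite)
product of the `c_g (f g)`. Conjugation by `ĝ` permutes the copies exactly as `G` permutes the
coordinates, so this map extends over `G` to `K ≀ G`. Injectivity is read off pointwise: on
`U·ĝ` the image of `f` acts as `c_g (f g)`, and a nontrivial `ĝ` moves `U` off itself.
-/

/-- The group of self-homeomorphisms of a topological space. -/
instance homeoGroup (X : Type*) [TopologicalSpace X] : Group (X ≃ₜ X) where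
  mul f g := g.trans f
  one := Homeomorph.refl X
  inv := Homeomorph.symm
  mul_assoc f g h := rfl
  one_mul f := rfl
  mul_one f := rfl
  inv_mul_cancel f := by ext x; exact f.symm_apply_apply x

/-- The restricted direct product `⊕_{g ∈ G} K`: functions `G → K` with
all but finitely many values trivial, as a subgroup of `∀ g : G, K`. -/
def restrictedPi (G : Type*) (K : Type*) [Group K] : Subgroup (∀ _ : G, K) where
  carrier := {f | {g | f g ≠ 1}.Finite}
  one_mem' := by simp
  mul_mem' := by
    intro a b ha hb
    refine (ha.union hb).subset ?_
    intro g hg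
    by_contra hc
    simp only [Set.mem_union, Set.mem_setOf_eq, not_or, not_not] at hc
    simp [Set.mem_setOf_eq, Pi.mul_apply, hc.1, hc.2] at hg
  inv_mem' := by
    intro a ha
    simpa using ha

/-- `G` acts on `⊕_{g ∈ G} K` by left translation of coordinates. -/
def restrictedLeftAut (G K : Type*) [Group G] [Group K] :
    G →* MulAut (restrictedPi G K) where
  toFun g :=
    { toFun := fun f => ⟨fun x => (f : ∀ _ : G, K) (g⁻¹ * x), by
        refine (f.2.image (fun y => g * y)).subset ?_
        intro x hx
        exact ⟨g⁻¹ * x, hx, by group⟩⟩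
      invFun := fun f => ⟨fun x => (f : ∀ _ : G, K) (g * x), by
        refine (f.2.image (fun y => g⁻¹ * y)).subset ?_
        intro x hx
        exact ⟨g * x, hx, by group⟩⟩
      left_inv := fun f => by ext x; simp
      right_inv := fun f => by ext x; simp
      map_mul' := fun f f' => rfl }
  map_one' := by ext f x; simp
  map_mul' := fun g g' => by ext f x; simp [mul_assoc]

/-- The restricted wreath product `K ≀ G = (⊕_{g ∈ G} K) ⋊ G`. -/
def RestrictedWreath (K G : Type*) [Group K] [Group G] :=
  (restrictedPi G K) ⋊[restrictedLeftAut G K] G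

instance (K G : Type*) [Group K] [Group G] : Group (RestrictedWreath K G) := by
  unfold RestrictedWreath; infer_instance


open Function

theorem Finset.noncommProd_subset {α β : Type*} [Monoid β] [DecidableEq α] {s t : Finset α}
    (hst : s ⊆ t) (f : α → β) (comm : (t : Set α).Pairwise (Commute on f))
    (hf : ∀ x ∈ t, x ∉ s → f x = 1) :
    s.noncommProd f (comm.mono (Finset.coe_subset.mpr hst)) = t.noncommProd f comm := by
  have hrest : (t \ s).noncommProd f (comm.mono (by simp)) = 1 :=
    Finset.noncommProd_eq_pow_card _ _ _ 1 (fun x hx => hf x (Finset.sdiff_subset hx)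
      (Finset.mem_sdiff.mp hx).2) |>.trans (one_pow _)
  calc s.noncommProd f _ = s.noncommProd f _ * (t \ s).noncommProd f _ := by rw [hrest, mul_one]
    _ = (s ∪ t \ s).noncommProd f (by rwa [Finset.union_sdiff_of_subset hst]) :=
      (Finset.noncommProd_union_of_disjoint Finset.disjoint_sdiff f _).symm
    _ = t.noncommProd f comm :=
      Finset.noncommProd_congr (Finset.union_sdiff_of_subset hst) (fun _ _ => rfl) _

theorem Finset.noncommProd_map {α β γ : Type*} [Monoid γ] (s : Finset α) (e : α ↪ β)
    (f : β → γ) (comm : ((s.map e : Finset β) : Set β).Pairwise (Commute on f)) :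
    (s.map e).noncommProd f comm = s.noncommProd (f ∘ e)
      (fun _ hx _ hy h => comm (Finset.mem_map_of_mem e hx) (Finset.mem_map_of_mem e hy)
        (e.injective.ne h)) := by
  simp only [Finset.noncommProd, Finset.map_val, Multiset.map_map]

theorem SemidirectProduct.lift_injective {N G H : Type*} [Group N] [Group G] [Group H]
    {φ : G →* MulAut N} (fn : N →* H) (fg : G →* H)
    (h : ∀ g, fn.comp (φ g).toMonoidHom = (MulAut.conj (fg g)).toMonoidHom.comp fn)
    (hfn : Injective fn) (hdisj : ∀ n g, fn n = fg g → g = 1) :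
    Injective (SemidirectProduct.lift fn fg h) := by
  refine (injective_iff_map_eq_one _).mpr fun x hx => ?_
  have hrange : fn x.left = fg x.right⁻¹ := by
    rw [map_inv, eq_inv_iff_mul_eq_one]
    exact hx
  have hright : x.right = 1 := inv_eq_one.mp (hdisj _ _ hrange)
  have hleft : x.left = 1 := hfn (by rw [hrange, hright, inv_one, map_one, map_one])
  exact SemidirectProduct.ext hleft hright

namespace restrictedPi

variable {ι K M : Type*} [Group K] [Monoid M]

noncomputable def support (f : restrictedPi ι K) : Finset ι := f.2.toFinset

theorem mem_support {f : restrictedPi ι K} {i : ι} : i ∈ support f ↔ (f : ι → K) i ≠ 1 :=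
  Set.Finite.mem_toFinset _

theorem support_mul_subset [DecidableEq ι] (f f' : restrictedPi ι K) :
    support (f * f') ⊆ support f ∪ support f' := by
  intro i hi
  rw [Finset.mem_union, mem_support, mem_support]
  by_contra! h
  exact mem_support.mp hi (by simp [h.1, h.2])

variable (c : ι → K →* M) (hc : Pairwise fun i j => ∀ a b : K, Commute (c i a) (c j b))

include hc in
theorem pairwise_commute_on (f : ι → K) (s : Set ι) :
    s.Pairwise (Commute on fun i => c i (f i)) :=
  fun _ _ _ _ hij => hc hij _ _

theorem noncommProd_support_eq [DecidableEq ι] (f : restrictedPi ι K) {t : Finset ι}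
    (ht : support f ⊆ t) :
    (support f).noncommProd (fun i => c i ((f : ι → K) i)) (pairwise_commute_on c hc _ _) =
      t.noncommProd (fun i => c i ((f : ι → K) i)) (pairwise_commute_on c hc _ _) :=
  Finset.noncommProd_subset ht _ _ fun i _ hi => by
    rw [not_ne_iff.mp (mt mem_support.mpr hi), map_one]

noncomputable def lift : restrictedPi ι K →* M where
  toFun f := (support f).noncommProd (fun i => c i ((f : ι → K) i)) (pairwise_commute_on c hc _ _)
  map_one' := Finset.noncommProd_eq_pow_card _ _ _ 1 (fun _ _ => map_one _) |>.trans (one_pow _)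
  map_mul' f f' := by
    classical
    have hf := noncommProd_support_eq c hc f (Finset.subset_union_left (s₂ := support f'))
    have hf' := noncommProd_support_eq c hc f' (Finset.subset_union_right (s₁ := support f))
    have hff' := noncommProd_support_eq c hc (f * f') (support_mul_subset f f')
    simp only [Subgroup.coe_mul, Pi.mul_apply, map_mul] at hff' ⊢
    rw [hf, hf', hff']
    exact Finset.noncommProd_mul_distrib (fun i => c i ((f : ι → K) i))
      (fun i => c i ((f' : ι → K) i)) _ _ fun _ _ _ _ hij => hc hij _ _

theorem lift_eq_noncommProd [DecidableEq ι] (f : restrictedPi ι K) {t : Finset ι}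
    (ht : support f ⊆ t) :
    lift c hc f = t.noncommProd (fun i => c i ((f : ι → K) i)) (pairwise_commute_on c hc _ _) :=
  noncommProd_support_eq c hc f ht

theorem lift_restrictedLeftAut {G : Type*} [Group G] (c : G → K →* M)
    (hc : Pairwise fun i j => ∀ a b : K, Commute (c i a) (c j b)) (σ : M →* M) (g : G)
    (hσ : ∀ h k, c (g * h) k = σ (c h k)) (f : restrictedPi G K) :
    lift c hc (restrictedLeftAut G K g f) = σ (lift c hc f) := by
  classical
  have hsupp : support (restrictedLeftAut G K g f) ⊆ (support f).map (mulLeftEmbedding g) := by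
    intro i hi
    have hfi := mem_support.mp hi
    exact Finset.mem_map.mpr ⟨g⁻¹ * i, mem_support.mpr hfi, by simp⟩
  rw [lift_eq_noncommProd c hc _ hsupp, lift_eq_noncommProd c hc f subset_rfl,
    Finset.noncommProd_map, Finset.map_noncommProd]
  refine Finset.noncommProd_congr rfl (fun i _ => ?_) _
  change c (g * i) ((f : G → K) (g⁻¹ * (g * i))) = _
  rw [inv_mul_cancel_left, hσ]

end restrictedPi

theorem restrictedPi.lift_mem {ι K M : Type*} [Group K] [Group M] (c : ι → K →* M)
    (hc : Pairwise fun i j => ∀ a b : K, Commute (c i a) (c j b)) {S : Subgroup M}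
    (hcS : ∀ i k, c i k ∈ S) (f : restrictedPi ι K) : restrictedPi.lift c hc f ∈ S :=
  Subgroup.noncommProd_mem S (restrictedPi.pairwise_commute_on c hc _ _) fun i _ => hcS i _

namespace Homeomorph

variable {X : Type*} [TopologicalSpace X]

def supportedIn (A : Set X) : Subgroup (X ≃ₜ X) where
  carrier := {f | ∀ x ∉ A, f x = x}
  one_mem' _ _ := rfl
  mul_mem' {f g} hf hg x hx := by
    change f (g x) = x
    rw [hg x hx, hf x hx]
  inv_mem' {f} hf x hx := by
    change f.symm x = x
    rw [f.symm_apply_eq, hf x hx]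

variable {A B : Set X} {f g : X ≃ₜ X}

theorem supportedIn_mono (h : A ⊆ B) : supportedIn A ≤ supportedIn B :=
  fun _ hf x hx => hf x (fun hxA => hx (h hxA))

theorem mapsTo_of_mem_supportedIn (hf : f ∈ supportedIn A) : Set.MapsTo f A A := by
  intro x hx
  by_contra hfx
  exact hfx (by rwa [f.injective (hf _ hfx)])

theorem commute_of_mem_supportedIn (hd : Disjoint A B) (hf : f ∈ supportedIn A)
    (hg : g ∈ supportedIn B) : Commute f g := by
  ext x
  change f (g x) = g (f x)
  by_cases hxA : x ∈ A
  · have hfx := mapsTo_of_mem_supportedIn hf hxA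
    rw [hg x (hd.notMem_of_mem_left hxA), hg _ (hd.notMem_of_mem_left hfx)]
  by_cases hxB : x ∈ B
  · have hgx := mapsTo_of_mem_supportedIn hg hxB
    rw [hf x (hd.notMem_of_mem_right hxB), hf _ (hd.notMem_of_mem_right hgx)]
  rw [hf x hxA, hg x hxB, hf x hxA]

theorem conj_mem_supportedIn_image (e : X ≃ₜ X) (hf : f ∈ supportedIn A) :
    e * f * e⁻¹ ∈ supportedIn (e '' A) := by
  intro x hx
  change e (f (e.symm x)) = x
  rw [hf _ fun h => hx ⟨_, h, e.apply_symm_apply x⟩, e.apply_symm_apply]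

end Homeomorph

namespace restrictedPi

open Homeomorph

variable {X ι K : Type*} [TopologicalSpace X] [Group K] {V : ι → Set X}
  {c : ι → K →* (X ≃ₜ X)} (hcV : ∀ i k, c i k ∈ supportedIn (V i)) (hV : Pairwise (Disjoint on V))

include hcV hV

theorem pairwise_commute_of_supportedIn :
    Pairwise fun i j => ∀ a b : K, Commute (c i a) (c j b) :=
  fun _ _ hij _ _ => commute_of_mem_supportedIn (hV hij) (hcV _ _) (hcV _ _)

variable (hc : Pairwise fun i j => ∀ a b : K, Commute (c i a) (c j b))

theorem lift_apply_of_mem (f : restrictedPi ι K) {i : ι} {x : X} (hx : x ∈ V i) :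
    lift c hc f x = c i ((f : ι → K) i) x := by
  classical
  rw [lift_eq_noncommProd c hc f (Finset.insert_erase_subset i _),
    Finset.noncommProd_insert_of_notMem _ _ _ _ (Finset.notMem_erase i _), mul_apply]
  refine congrArg _ (Subgroup.noncommProd_mem (supportedIn (V i)ᶜ) _ (fun j hj => ?_) x
    (Set.notMem_compl_iff.mpr hx))
  exact supportedIn_mono (hV (Finset.ne_of_mem_erase hj)).subset_compl_right (hcV _ _)

theorem mapsTo_lift (f : restrictedPi ι K) (i : ι) : Set.MapsTo (lift c hc f) (V i) (V i) :=
  fun _ hx => lift_apply_of_mem hcV hV hc f hx ▸ mapsTo_of_mem_supportedIn (hcV _ _) hx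

theorem lift_injective (hinj : ∀ i, Injective (c i)) : Injective (lift c hc) := by
  refine (injective_iff_map_eq_one _).mpr fun f hf => Subtype.ext (funext fun i => ?_)
  refine (injective_iff_map_eq_one _).mp (hinj i) _ (ext fun x => ?_)
  by_cases hx : x ∈ V i
  · rw [← lift_apply_of_mem hcV hV hc f hx, hf]
  · exact hcV _ _ x hx

end restrictedPi

section Conjugates

variable {G K H : Type*} [Group G] [Group K] [Group H]

def conjugateCopies (e : G →* H) (ρ : K →* H) (g : G) : K →* H :=
  (MulAut.conj (e g)).toMonoidHom.comp ρ

theorem conjugateCopies_mul_apply (e : G →* H) (ρ : K →* H) (g h : G) (k : K) :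
    conjugateCopies e ρ (g * h) k = MulAut.conj (e g) (conjugateCopies e ρ h k) := by
  simp [conjugateCopies, mul_assoc]

theorem conjugateCopies_injective (e : G →* H) {ρ : K →* H} (hρ : Injective ρ) (g : G) :
    Injective (conjugateCopies e ρ g) :=
  (MulAut.conj (e g)).injective.comp hρ

end Conjugates

section Demonstration

open Homeomorph

variable {X G K : Type*} [TopologicalSpace X] [Group G] [Group K] {U : Set X}
  {e : G →* (X ≃ₜ X)} {ρ : K →* (X ≃ₜ X)}

theorem pairwise_disjoint_image_of_disjoint (hdem : ∀ g : G, g ≠ 1 → Disjoint (e g '' U) U) :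
    Pairwise (Disjoint on fun g => e g '' U) := by
  intro g h hgh
  have htrans : e g '' U = e h '' (e (h⁻¹ * g) '' U) := by
    rw [Set.image_image, map_mul, map_inv]
    simp only [mul_apply, inv_apply, apply_symm_apply]
  change Disjoint (e g '' U) (e h '' U)
  rw [htrans, Set.disjoint_image_iff (e h).injective]
  exact hdem _ fun h1 => hgh (inv_mul_eq_one.mp h1).symm

theorem conjugateCopies_mem_supportedIn (hρU : ∀ k, ρ k ∈ supportedIn U) (g : G) (k : K) :
    conjugateCopies e ρ g k ∈ supportedIn (e g '' U) :=
  conj_mem_supportedIn_image (e g) (hρU k)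

variable (hdem : ∀ g : G, g ≠ 1 → Disjoint (e g '' U) U) (hρU : ∀ k, ρ k ∈ supportedIn U)

include hdem hρU

theorem pairwise_commute_conjugateCopies :
    Pairwise fun g h => ∀ a b : K, Commute (conjugateCopies e ρ g a) (conjugateCopies e ρ h b) :=
  restrictedPi.pairwise_commute_of_supportedIn (conjugateCopies_mem_supportedIn hρU)
    (pairwise_disjoint_image_of_disjoint hdem)

noncomputable def wreathHom : RestrictedWreath K G →* (X ≃ₜ X) :=
  SemidirectProduct.lift (restrictedPi.lift _ (pairwise_commute_conjugateCopies hdem hρU)) e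
    fun g => MonoidHom.ext fun f => restrictedPi.lift_restrictedLeftAut _ _
      (MulAut.conj (e g)).toMonoidHom g (conjugateCopies_mul_apply e ρ g) f

theorem wreathHom_mem {S : Subgroup (X ≃ₜ X)} (he : ∀ g, e g ∈ S) (hρS : ∀ k, ρ k ∈ S)
    (x : RestrictedWreath K G) : wreathHom hdem hρU x ∈ S :=
  S.mul_mem (restrictedPi.lift_mem _ _ (fun g k => S.mul_mem (S.mul_mem (he g) (hρS k))
    (S.inv_mem (he g))) _) (he _)

theorem wreathHom_injective (hU : U.Nonempty) (hρ : Injective ρ) :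
    Injective (wreathHom hdem hρU) := by
  have hcV := conjugateCopies_mem_supportedIn (e := e) hρU
  have hV := pairwise_disjoint_image_of_disjoint hdem
  refine SemidirectProduct.lift_injective _ _ _
    (restrictedPi.lift_injective hcV hV _ (conjugateCopies_injective e hρ)) fun f g hfg => ?_
  by_contra hg
  obtain ⟨x, hx⟩ := hU
  have hx₁ : x ∈ e 1 '' U := ⟨x, hx, by simp⟩
  have hfx₁ := restrictedPi.mapsTo_lift hcV hV (pairwise_commute_conjugateCopies hdem hρU) f 1 hx₁
  have hfxg : restrictedPi.lift _ (pairwise_commute_conjugateCopies hdem hρU) f x ∈ e g '' U :=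
    hfg ▸ ⟨x, hx, rfl⟩
  exact Set.disjoint_left.mp (hV hg) hfxg hfx₁

end Demonstration

theorem wreath_embeds_of_demonstrable_general {X : Type*} [TopologicalSpace X]
    (K : Subgroup (X ≃ₜ X))
    (hloc : ∀ U : Set X, IsOpen U → U.Nonempty →
      ∃ KU : Subgroup (X ≃ₜ X), KU ≤ K ∧
        (∀ h ∈ KU, ∀ x ∉ U, h x = x) ∧ Nonempty (KU ≃* K))
    {G : Type*} [Group G] (φ : G →* K)
    (U : Set X) (hUopen : IsOpen U) (hUne : U.Nonempty)
    (hdem : ∀ g : G, g ≠ 1 → Disjoint (⇑(φ g : X ≃ₜ X) '' U) U) :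
    ∃ ψ : RestrictedWreath K G →* K, Function.Injective ψ := by
  obtain ⟨KU, hKU, hKUsupp, ⟨β⟩⟩ := hloc U hUopen hUne
  let ρ : K →* (X ≃ₜ X) := KU.subtype.comp β.symm.toMonoidHom
  have hρU : ∀ k, ρ k ∈ Homeomorph.supportedIn U := fun k => hKUsupp _ (β.symm k).2
  have hψK := wreathHom_mem (e := K.subtype.comp φ) hdem hρU (fun g => (φ g).2)
    fun k => hKU (β.symm k).2
  refine ⟨(wreathHom hdem hρU).codRestrict K hψK, ?_⟩
  rw [MonoidHom.injective_codRestrict]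
  exact wreathHom_injective hdem hρU hUne (Subtype.val_injective.comp β.symm.injective)

/-- Bleak–Salazar-Díaz: if `K` is a group of homeomorphisms of `X` acting with
local realisation and `G` is demonstrable for `K`, then `K ≀ G` embeds into `K`. -/
theorem wreath_embeds_of_demonstrable {X : Type*} [TopologicalSpace X]
    (K : Subgroup (X ≃ₜ X))
    (hloc : ∀ U : Set X, IsOpen U → U.Nonempty →
      ∃ KU : Subgroup (X ≃ₜ X), KU ≤ K ∧
        (∀ h ∈ KU, ∀ x ∉ U, h x = x) ∧ Nonempty (KU ≃* K))
    {G : Type*} [Group G] (φ : G →* K) (hφ : Function.Injective φ)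
    (U : Set X) (hUopen : IsOpen U) (hUne : U.Nonempty)
    (hdem : ∀ g : G, g ≠ 1 → Disjoint (⇑(φ g : X ≃ₜ X) '' U) U) :
    ∃ ψ : RestrictedWreath K G →* K, Function.Injective ψ :=
  wreath_embeds_of_demonstrable_general K hloc φ U hUopen hUne hdem
end

section
/- Let Γ be a finite simple graph with generators g₁,…,gₙ of the right-angled Artin group A_Γ, let P be the set of pairs {i,j} with g_i g_j ≠ g_j g_i, and let X = ∏_{i=1}^n {0,1}^ω × ∏_{{i,j}∈P} {i,j,∅}^ω. Define homeomorphisms h_i of X as in the paper's five-piece construction (using the subcubes S_i where all coordinates x_{ij}, j ∈ P_i, begin with symbol i, the binary prefix cubes C_i(α), and the canonical prepending maps F_i and L_{i,α}). Then for all i, j, if g_i and g_j commute in A_Γ, the homeomorphisms h_i and h_j commute. -/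
/-- Prepend a finite word to an infinite sequence. -/
def prependSeq {A : Type*} (α : List A) (x : ℕ → A) : ℕ → A :=
  fun k => if h : k < α.length then α.get ⟨k, h⟩ else x (k - α.length)

/-- `x` begins with the finite word `α`. -/
def beginsWith {A : Type*} (α : List A) (x : ℕ → A) : Prop :=
  ∃ y, x = prependSeq α y

/-- The subcube of the Cantor cube `∏ i, (A i)^ω` determined by a tuple of prefixes. -/
def subcube {ι : Type*} (A : ι → Type*) (α : ∀ i, List (A i)) :
    Set (∀ i, ℕ → A i) :=
  {x | ∀ i, beginsWith (α i) (x i)}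

/-- Prepend a tuple of finite words coordinatewise. -/
def cubePrepend {ι : Type*} (A : ι → Type*) (α : ∀ i, List (A i))
    (y : ∀ i, ℕ → A i) : ∀ i, ℕ → A i :=
  fun i => prependSeq (α i) (y i)


variable {n : ℕ}

/-- The set `P` of (unordered) pairs of non-commuting generators. -/
def ncP (G : SimpleGraph (Fin n)) : Set (Sym2 (Fin n)) :=
  {p | ∃ i j, p = s(i, j) ∧ ¬ Commute (raagGen G i) (raagGen G j)}

/-- Index set for the Cantor cube `X`: one binary coordinate for each generator
and one coordinate for each non-commuting pair. -/
def raagIdx (G : SimpleGraph (Fin n)) : Type := (Fin n) ⊕ (ncP G)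

/-- The alphabets of the cube `X`: `{0,1}` for generator coordinates and
`{i, j, ∅}` for the coordinate of a pair `{i,j} ∈ P`. -/
def raagAlph (G : SimpleGraph (Fin n)) : raagIdx G → Type :=
  fun k => match k with
  | Sum.inl _ => Bool
  | Sum.inr p => Option {v : Fin n // v ∈ (p : Sym2 (Fin n))}

noncomputable instance (G : SimpleGraph (Fin n)) (k : raagIdx G) :
    TopologicalSpace (raagAlph G k) := ⊥

instance (G : SimpleGraph (Fin n)) (k : raagIdx G) :
    DiscreteTopology (raagAlph G k) := ⟨rfl⟩

/-- The Cantor cube `X` of the construction. -/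
abbrev raagCube (G : SimpleGraph (Fin n)) : Type := ∀ k, ℕ → raagAlph G k

/-- `C_i(α)`: points whose binary coordinate `x_i` begins with `α`. -/
def Cset (G : SimpleGraph (Fin n)) (i : Fin n) (α : List Bool) :
    Set (raagCube G) :=
  {x | beginsWith α (x (Sum.inl i))}

/-- `S_i`: points all of whose coordinates `x_{ij}`, `j ∈ P_i`, begin with `i`. -/
def Scube (G : SimpleGraph (Fin n)) (i : Fin n) : Set (raagCube G) :=
  {x | ∀ (p : ncP G) (h : i ∈ (p : Sym2 (Fin n))), x (Sum.inr p) 0 = some ⟨i, h⟩}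

open Classical in
/-- `F_i`: prepend the symbol `i` to each coordinate `x_{ij}`, `j ∈ P_i`. -/
noncomputable def Fmap (G : SimpleGraph (Fin n)) (i : Fin n) :
    raagCube G → raagCube G := fun x k =>
  match k with
  | Sum.inl j => x (Sum.inl j)
  | Sum.inr p =>
      if h : i ∈ (p : Sym2 (Fin n)) then
        prependSeq [some ⟨i, h⟩] (x (Sum.inr p))
      else x (Sum.inr p)

open Classical in
/-- `F_i⁻¹`: delete the first symbol of each coordinate `x_{ij}`, `j ∈ P_i`. -/
noncomputable def Fdrop (G : SimpleGraph (Fin n)) (i : Fin n) :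
    raagCube G → raagCube G := fun x k =>
  match k with
  | Sum.inl j => x (Sum.inl j)
  | Sum.inr p =>
      if i ∈ (p : Sym2 (Fin n)) then (fun m => x (Sum.inr p) (m + 1))
      else x (Sum.inr p)

/-- `L_{i,α}`: prepend the binary word `α` to the coordinate `x_i`. -/
def Lmap (G : SimpleGraph (Fin n)) (i : Fin n) (α : List Bool) :
    raagCube G → raagCube G := fun x k =>
  match k with
  | Sum.inl j => if j = i then prependSeq α (x (Sum.inl j)) else x (Sum.inl j)
  | Sum.inr p => x (Sum.inr p)

/-- `L_{i,α}⁻¹` for a word of length `m`: delete the first `m` symbols of `x_i`. -/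
def Ldrop (G : SimpleGraph (Fin n)) (i : Fin n) (m : ℕ) :
    raagCube G → raagCube G := fun x k =>
  match k with
  | Sum.inl j => if j = i then (fun t => x (Sum.inl j) (t + m)) else x (Sum.inl j)
  | Sum.inr p => x (Sum.inr p)

/-- `S_{ii} = F_i(S_i)`. -/
def Sii (G : SimpleGraph (Fin n)) (i : Fin n) : Set (raagCube G) :=
  Fmap G i '' Scube G i

open Classical in
/-- The five-piece homeomorphism `h_i` of the paper's construction. -/
noncomputable def hmap (G : SimpleGraph (Fin n)) (i : Fin n) :
    raagCube G → raagCube G := fun x =>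
  if x ∉ Scube G i then Lmap G i [true, false] (Fmap G i x)
  else if x ∈ Sii G i then x
  else if beginsWith [true] (x (Sum.inl i)) then Lmap G i [true] x
  else if beginsWith [false, true] (x (Sum.inl i)) then Fdrop G i (Ldrop G i 2 x)
  else Ldrop G i 1 x

/-!
Each `h_i` reads and rewrites only the coordinates `x_i` and `x_{ij}` (`{i,j} ∈ P`): every
building block `L`, `L⁻¹`, `F_i`, `F_i⁻¹` acts coordinatewise on them, and the five pieces are
cut out by conditions on them alone. If `g_i` and `g_j` commute then `{i,j} ∉ P`, so for `i ≠ j`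
the coordinates of `h_i` and of `h_j` are disjoint, and maps of a product acting on disjoint
sets of coordinates commute.
-/

structure IsLocalOn {ι : Type*} {β : ι → Type*} (f : (∀ k, β k) → ∀ k, β k) (s : Set ι) :
    Prop where
  apply_of_notMem : ∀ x k, k ∉ s → f x k = x k
  apply_congr : ∀ x y, (∀ k ∈ s, x k = y k) → ∀ k ∈ s, f x k = f y k

namespace IsLocalOn

variable {ι : Type*} {β : ι → Type*} {f g : (∀ k, β k) → ∀ k, β k} {s t : Set ι}

theorem id : IsLocalOn (id : (∀ k, β k) → ∀ k, β k) s :=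
  ⟨fun _ _ _ => rfl, fun _ _ h => h⟩

theorem of_coordinatewise (hout : ∀ x k, k ∉ s → f x k = x k)
    (hcoord : ∀ x y k, x k = y k → f x k = f y k) : IsLocalOn f s :=
  ⟨hout, fun x y h k hk => hcoord x y k (h k hk)⟩

theorem comp (hf : IsLocalOn f s) (hg : IsLocalOn g s) : IsLocalOn (f ∘ g) s where
  apply_of_notMem x k hk := (hf.apply_of_notMem _ k hk).trans (hg.apply_of_notMem x k hk)
  apply_congr x y h := hf.apply_congr _ _ (hg.apply_congr x y h)

theorem ite {p : (∀ k, β k) → Prop} [DecidablePred p]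
    (hp : ∀ x y, (∀ k ∈ s, x k = y k) → (p x ↔ p y))
    (hf : IsLocalOn f s) (hg : IsLocalOn g s) :
    IsLocalOn (fun x => if p x then f x else g x) s where
  apply_of_notMem x k hk := by
    split_ifs
    exacts [hf.apply_of_notMem x k hk, hg.apply_of_notMem x k hk]
  apply_congr x y h k hk := by
    by_cases hx : p x
    · simp only [if_pos hx, if_pos ((hp x y h).mp hx), hf.apply_congr x y h k hk]
    · simp only [if_neg hx, if_neg (mt (hp x y h).mpr hx), hg.apply_congr x y h k hk]

theorem commute (hf : IsLocalOn f s) (hg : IsLocalOn g t) (hst : Disjoint s t) :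
    Function.Commute f g := by
  intro x
  funext k
  have hg_on_s : ∀ k ∈ s, g x k = x k := fun k hk =>
    hg.apply_of_notMem x k (Set.disjoint_left.mp hst hk)
  have hf_on_t : ∀ k ∈ t, f x k = x k := fun k hk =>
    hf.apply_of_notMem x k (Set.disjoint_right.mp hst hk)
  by_cases hs : k ∈ s
  · rw [hf.apply_congr _ _ hg_on_s k hs, hg.apply_of_notMem _ k (Set.disjoint_left.mp hst hs)]
  by_cases ht : k ∈ t
  · rw [hf.apply_of_notMem _ k hs, hg.apply_congr _ _ hf_on_t k ht]
  · rw [hf.apply_of_notMem _ k hs, hg.apply_of_notMem x k ht, hg.apply_of_notMem _ k ht,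
      hf.apply_of_notMem x k hs]

end IsLocalOn

def coordsOf (G : SimpleGraph (Fin n)) (i : Fin n) : Set (raagIdx G) := fun k =>
  match k with
  | Sum.inl a => a = i
  | Sum.inr p => i ∈ (p : Sym2 (Fin n))

section locality

variable {G : SimpleGraph (Fin n)} {i : Fin n}

theorem isLocalOn_Lmap (α : List Bool) : IsLocalOn (Lmap G i α) (coordsOf G i) := by
  refine .of_coordinatewise (fun x k hk => ?_) (fun x y k h => ?_)
  · cases k with
    | inl a => exact if_neg (show a ≠ i from hk)
    | inr p => rfl
  · cases k with
    | inl a => simp only [Lmap]; rw [h]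
    | inr p => exact h

theorem isLocalOn_Ldrop (m : ℕ) : IsLocalOn (Ldrop G i m) (coordsOf G i) := by
  refine .of_coordinatewise (fun x k hk => ?_) (fun x y k h => ?_)
  · cases k with
    | inl a => exact if_neg (show a ≠ i from hk)
    | inr p => rfl
  · cases k with
    | inl a => simp only [Ldrop]; rw [h]
    | inr p => exact h

theorem isLocalOn_Fmap : IsLocalOn (Fmap G i) (coordsOf G i) := by
  refine .of_coordinatewise (fun x k hk => ?_) (fun x y k h => ?_)
  · cases k with
    | inl a => rfl
    | inr p => exact dif_neg (show i ∉ (p : Sym2 (Fin n)) from hk)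
  · cases k with
    | inl a => exact h
    | inr p => simp only [Fmap]; rw [h]

theorem isLocalOn_Fdrop : IsLocalOn (Fdrop G i) (coordsOf G i) := by
  refine .of_coordinatewise (fun x k hk => ?_) (fun x y k h => ?_)
  · cases k with
    | inl a => rfl
    | inr p => exact if_neg (show i ∉ (p : Sym2 (Fin n)) from hk)
  · cases k with
    | inl a => exact h
    | inr p => simp only [Fdrop]; rw [h]

theorem mem_Sii_iff {x : raagCube G} :
    x ∈ Sii G i ↔ ∀ (p : ncP G) (h : i ∈ (p : Sym2 (Fin n))),
      x (Sum.inr p) 0 = some ⟨i, h⟩ ∧ x (Sum.inr p) 1 = some ⟨i, h⟩ := by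
  constructor
  · rintro ⟨z, hz, rfl⟩ p h
    simp only [Fmap, dif_pos h, prependSeq]
    exact ⟨rfl, hz p h⟩
  · intro H
    refine ⟨Fdrop G i x, fun p h => by simpa only [Fdrop, if_pos h] using (H p h).2, ?_⟩
    funext k
    cases k with
    | inl a => rfl
    | inr p =>
      simp only [Fmap, Fdrop]
      by_cases h : i ∈ (p : Sym2 (Fin n))
      · rw [dif_pos h, if_pos h]
        funext m
        cases m with
        | zero => exact ((H p h).1).symm
        | succ m =>
          unfold prependSeq
          rw [dif_neg (by show ¬ (m + 1 < 1); omega)]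
          rfl
      · rw [dif_neg h, if_neg h]

open Classical in
theorem isLocalOn_hmap : IsLocalOn (hmap G i) (coordsOf G i) := by
  have hS : ∀ x y : raagCube G, (∀ k ∈ coordsOf G i, x k = y k) →
      (x ∈ Scube G i ↔ y ∈ Scube G i) := fun x y h =>
    forall_congr' fun p => forall_congr' fun hp => by rw [h (Sum.inr p) hp]
  have hSii : ∀ x y : raagCube G, (∀ k ∈ coordsOf G i, x k = y k) →
      (x ∈ Sii G i ↔ y ∈ Sii G i) := fun x y h => by
    simp only [mem_Sii_iff]
    exact forall_congr' fun p => forall_congr' fun hp => by rw [h (Sum.inr p) hp]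
  have hC : ∀ α : List Bool, ∀ x y : raagCube G, (∀ k ∈ coordsOf G i, x k = y k) →
      (beginsWith α (x (Sum.inl i)) ↔ beginsWith α (y (Sum.inl i))) := fun α x y h => by
    rw [h (Sum.inl i) rfl]
  unfold hmap
  exact .ite (fun x y h => not_congr (hS x y h)) ((isLocalOn_Lmap _).comp isLocalOn_Fmap) <|
    .ite hSii .id <| .ite (hC _) (isLocalOn_Lmap _) <|
      .ite (hC _) (isLocalOn_Fdrop.comp (isLocalOn_Ldrop _)) (isLocalOn_Ldrop _)

end locality

theorem disjoint_coordsOf {G : SimpleGraph (Fin n)} {i j : Fin n} (hne : i ≠ j)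
    (hij : Commute (raagGen G i) (raagGen G j)) : Disjoint (coordsOf G i) (coordsOf G j) := by
  refine Set.disjoint_left.mpr fun k hi hj => ?_
  cases k with
  | inl a => exact hne (hi.symm.trans hj)
  | inr p =>
    obtain ⟨a, b, hab, hnc⟩ := p.2
    have hp : s(a, b) = s(i, j) := hab ▸ (Sym2.mem_and_mem_iff hne).mp ⟨hi, hj⟩
    rcases Sym2.eq_iff.mp hp with ⟨rfl, rfl⟩ | ⟨rfl, rfl⟩
    exacts [hnc hij, hnc hij.symm]

/-- If the generators `g_i` and `g_j` commute in `A_Γ`, then the homeomorphisms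
`h_i` and `h_j` commute. -/
theorem hmap_commute_of_commute (G : SimpleGraph (Fin n)) (i j : Fin n)
    (hij : Commute (raagGen G i) (raagGen G j)) :
    ∀ x : raagCube G, hmap G i (hmap G j x) = hmap G j (hmap G i x) := by
  rcases eq_or_ne i j with rfl | hne
  · exact fun _ => rfl
  exact isLocalOn_hmap.commute isLocalOn_hmap (disjoint_coordsOf hne hij)
end

section
/- With notation as in the paper's construction: the five domain pieces X∖S_i, S_{ii}, (S_i∖S_{ii})∩C_i(1), (S_i∖S_{ii})∩C_i(01), (S_i∖S_{ii})∩C_i(00) form a partition of the Cantor cube X, each a finite union of subcubes; the corresponding five range pieces (S_i∖S_{ii})∩C_i(10), S_{ii}, (S_i∖S_{ii})∩C_i(11), X∖S_i, (S_i∖S_{ii})∩C_i(0) also form a partition of X into finite unions of subcubes; and hence the map h_i defined piecewise by the canonical homeomorphisms L_{i,10}∘F_i, id, L_{i,1}, F_i⁻¹∘L_{i,01}⁻¹, L_{i,0}⁻¹ respectively is a well-defined rearrangement (element of XV). -/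
variable {n : ℕ}

/-- A set is a finite union of subcubes. -/
def FinUnionSubcubes {ι : Type*} (A : ι → Type*) (E : Set (∀ i, ℕ → A i)) : Prop :=
  ∃ (k : ℕ) (β : Fin k → ∀ i, List (A i)), E = ⋃ a, subcube A (β a)

/-- A homeomorphism of a Cantor cube is a rearrangement if it maps a partition of
the cube into subcubes onto another such partition via the canonical
prefix-replacement homeomorphisms. -/
def IsRearrangement {ι : Type*} (A : ι → Type*) [∀ i, TopologicalSpace (A i)]
    (h : (∀ i, ℕ → A i) ≃ₜ (∀ i, ℕ → A i)) : Prop :=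
  ∃ (k : ℕ) (D R : Fin k → ∀ i, List (A i)),
    (⋃ a, subcube A (D a)) = Set.univ ∧
    (∀ a b, a ≠ b → Disjoint (subcube A (D a)) (subcube A (D b))) ∧
    (⋃ a, subcube A (R a)) = Set.univ ∧
    (∀ a b, a ≠ b → Disjoint (subcube A (R a)) (subcube A (R b))) ∧
    ∀ a y, h (cubePrepend A (D a) y) = cubePrepend A (R a) y

/-!
Every point of `X` gets an index `(a, f)`: `a` is the branch of `h_i` it falls into, and `f` is
the family of symbols that the coordinates `x_{ij}` carry right after their leading `i` (on `S_i`)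
or in front (off `S_i`). The domain subcubes, each prescribed by a prefix of `x_i` and by at most
two symbols on every `x_{ij}`, are exactly the fibres of this index. The same holds for the range
subcubes and the index computed from the range branches. `h_i` carries the domain subcube of
index `(a, f)` onto the range subcube of the same index by a prefix replacement. So both families
partition `X` into finitely many subcubes, each of the five pieces is a union of subcubes from one
block, and the prefix replacement in the opposite direction inverts `h_i`.
-/

section Prefix

variable {B : Type*}

@[simp] theorem prependSeq_nil (y : ℕ → B) : prependSeq [] y = y := by
  funext k; simp [prependSeq]

@[simp] theorem prependSeq_cons_zero (a : B) (l : List B) (y : ℕ → B) :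
    prependSeq (a :: l) y 0 = a := by
  simp [prependSeq]

@[simp] theorem prependSeq_cons_succ (a : B) (l : List B) (y : ℕ → B) (k : ℕ) :
    prependSeq (a :: l) y (k + 1) = prependSeq l y k := by
  simp only [prependSeq, List.length_cons, Nat.add_lt_add_iff_right, Nat.add_sub_add_right]
  split_ifs <;> rfl

theorem prependSeq_append (l₁ l₂ : List B) (y : ℕ → B) :
    prependSeq (l₁ ++ l₂) y = prependSeq l₁ (prependSeq l₂ y) := by
  induction l₁ with
  | nil => simp
  | cons a l ih => funext k; cases k <;> simp [ih]

theorem prependSeq_add_length (l : List B) (y : ℕ → B) (m : ℕ) :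
    prependSeq l y (m + l.length) = y m := by
  simp [prependSeq]

theorem prependSeq_shift {l : List B} {m : ℕ} (hm : m ≤ l.length) (y : ℕ → B) :
    (fun t => prependSeq l y (t + m)) = prependSeq (l.drop m) y := by
  conv_lhs => rw [← List.take_append_drop m l, prependSeq_append]
  funext t
  simpa [List.length_take, hm] using prependSeq_add_length (l.take m) _ t

theorem beginsWith_nil (x : ℕ → B) : beginsWith [] x := ⟨x, by simp⟩

theorem beginsWith_cons {a : B} {l : List B} {x : ℕ → B} :
    beginsWith (a :: l) x ↔ x 0 = a ∧ beginsWith l (fun m => x (m + 1)) := by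
  constructor
  · rintro ⟨y, rfl⟩
    exact ⟨by simp, y, by funext m; simp⟩
  · rintro ⟨h0, y, hy⟩
    refine ⟨y, funext fun k => ?_⟩
    cases k with
    | zero => simpa using h0
    | succ k => simpa using congrFun hy k

variable [TopologicalSpace B]

theorem continuous_prependSeq (l : List B) : Continuous (prependSeq l) := by
  refine continuous_pi fun k => ?_
  unfold prependSeq
  split_ifs
  exacts [continuous_const, continuous_apply _]

theorem isOpen_setOf_beginsWith [DiscreteTopology B] (l : List B) :
    IsOpen {x : ℕ → B | beginsWith l x} := by
  induction l with
  | nil => simp [beginsWith_nil]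
  | cons a l ih =>
    simp only [beginsWith_cons, Set.ofPred_and]
    exact ((isOpen_discrete {a}).preimage (continuous_apply 0)).inter
      (ih.preimage (f := fun (x : ℕ → B) m => x (m + 1))
        (continuous_pi fun m => continuous_apply (m + 1)))

end Prefix

section Subcube

variable {ι : Type*} {A : ι → Type*}

def cubeDrop (α : ∀ k, List (A k)) (x : ∀ k, ℕ → A k) : ∀ k, ℕ → A k :=
  fun k m => x k (m + (α k).length)

theorem cubeDrop_cubePrepend (α : ∀ k, List (A k)) (y : ∀ k, ℕ → A k) :
    cubeDrop α (cubePrepend A α y) = y := by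
  funext k m
  exact prependSeq_add_length _ _ _

theorem cubePrepend_mem_subcube (α : ∀ k, List (A k)) (y : ∀ k, ℕ → A k) :
    cubePrepend A α y ∈ subcube A α :=
  fun _ => ⟨_, rfl⟩

theorem subcube_eq_range (α : ∀ k, List (A k)) :
    subcube A α = Set.range (cubePrepend A α) := by
  ext x
  refine ⟨fun hx => ?_, ?_⟩
  · choose y hy using hx
    exact ⟨y, funext fun k => (hy k).symm⟩
  · rintro ⟨y, rfl⟩
    exact cubePrepend_mem_subcube α y

theorem cubePrepend_cubeDrop {α : ∀ k, List (A k)} {x : ∀ k, ℕ → A k}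
    (hx : x ∈ subcube A α) : cubePrepend A α (cubeDrop α x) = x := by
  rw [subcube_eq_range] at hx
  obtain ⟨y, rfl⟩ := hx
  rw [cubeDrop_cubePrepend]

theorem image_subcube_of_cubePrepend {f : (∀ k, ℕ → A k) → ∀ k, ℕ → A k}
    {α β : ∀ k, List (A k)} (hf : ∀ y, f (cubePrepend A α y) = cubePrepend A β y) :
    f '' subcube A α = subcube A β := by
  rw [subcube_eq_range, subcube_eq_range, ← Set.range_comp]
  exact congrArg Set.range (funext hf)

theorem finUnionSubcubes_iUnion {γ : Type*} [Finite γ] (β : γ → ∀ k, List (A k)) :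
    FinUnionSubcubes A (⋃ t, subcube A (β t)) := by
  obtain ⟨m, ⟨e⟩⟩ := Finite.exists_equiv_fin γ
  exact ⟨m, β ∘ e.symm, (e.symm.surjective.iUnion_comp fun t => subcube A (β t)).symm⟩

variable [∀ k, TopologicalSpace (A k)]

theorem isOpen_subcube [Finite ι] [∀ k, DiscreteTopology (A k)] (α : ∀ k, List (A k)) :
    IsOpen (subcube A α) := by
  have : subcube A α = ⋂ k, (fun x : ∀ k, ℕ → A k => x k) ⁻¹' {s | beginsWith (α k) s} := by
    ext; simp [subcube]
  rw [this]
  exact isOpen_iInter_of_finite fun k => (isOpen_setOf_beginsWith _).preimage (continuous_apply k)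

theorem continuous_cubePrepend_cubeDrop (α β : ∀ k, List (A k)) :
    Continuous fun x => cubePrepend A β (cubeDrop α x) :=
  continuous_pi fun k => (continuous_prependSeq (β k)).comp
    (continuous_pi fun _ => continuous_apply _ |>.comp (continuous_apply k))

end Subcube

section Classifier

variable {ι T : Type*} {A : ι → Type*}

def ClassifiesSubcubes (c : (∀ k, ℕ → A k) → T) (β : T → ∀ k, List (A k)) : Prop :=
  ∀ t, subcube A (β t) = c ⁻¹' {t}

namespace ClassifiesSubcubes

variable {c : (∀ k, ℕ → A k) → T} {β : T → ∀ k, List (A k)}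

theorem mem_subcube_iff (hc : ClassifiesSubcubes c β) {x : ∀ k, ℕ → A k} {t : T} :
    x ∈ subcube A (β t) ↔ c x = t := by
  rw [hc]; rfl

theorem mem_subcube (hc : ClassifiesSubcubes c β) (x : ∀ k, ℕ → A k) :
    x ∈ subcube A (β (c x)) :=
  hc.mem_subcube_iff.2 rfl

theorem iUnion_eq_univ (hc : ClassifiesSubcubes c β) : ⋃ t, subcube A (β t) = Set.univ :=
  Set.iUnion_eq_univ_iff.2 fun x => ⟨c x, hc.mem_subcube x⟩

theorem pairwise_disjoint (hc : ClassifiesSubcubes c β) :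
    Pairwise fun s t => Disjoint (subcube A (β s)) (subcube A (β t)) := fun s t hst => by
  simp only [hc s, hc t]
  exact pairwise_disjoint_fiber c hst

theorem preimage_eq_iUnion (hc : ClassifiesSubcubes c β) {K : Type*} (π : T → K) (a : K) :
    (π ∘ c) ⁻¹' {a} = ⋃ t : {t // π t = a}, subcube A (β t) := by
  ext x
  simp only [Set.mem_preimage, Function.comp_apply, Set.mem_singleton_iff, Set.mem_iUnion,
    Subtype.exists, exists_prop, hc.mem_subcube_iff, exists_eq_right']

theorem finUnionSubcubes_preimage [Finite T] (hc : ClassifiesSubcubes c β) {K : Type*}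
    (π : T → K) (a : K) : FinUnionSubcubes A ((π ∘ c) ⁻¹' {a}) := by
  rw [hc.preimage_eq_iUnion]
  exact finUnionSubcubes_iUnion _

variable {c' : (∀ k, ℕ → A k) → T} {β' : T → ∀ k, List (A k)}
  {f : (∀ k, ℕ → A k) → ∀ k, ℕ → A k}

theorem image_preimage (hc : ClassifiesSubcubes c β) (hc' : ClassifiesSubcubes c' β')
    (hf : ∀ t y, f (cubePrepend A (β t) y) = cubePrepend A (β' t) y) {K : Type*} (π : T → K)
    (a : K) : f '' ((π ∘ c) ⁻¹' {a}) = (π ∘ c') ⁻¹' {a} := by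
  rw [hc.preimage_eq_iUnion, hc'.preimage_eq_iUnion, Set.image_iUnion]
  exact Set.iUnion_congr fun t => image_subcube_of_cubePrepend (hf t)

variable [∀ k, TopologicalSpace (A k)] [∀ k, DiscreteTopology (A k)] [Finite ι]

theorem continuous (hc : ClassifiesSubcubes c β)
    (hf : ∀ t y, f (cubePrepend A (β t) y) = cubePrepend A (β' t) y) : Continuous f := by
  refine continuous_iff_continuousAt.2 fun x => ?_
  have hfx : Set.EqOn f (fun z => cubePrepend A (β' (c x)) (cubeDrop (β (c x)) z))
      (subcube A (β (c x))) := fun z hz => by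
    conv_lhs => rw [← cubePrepend_cubeDrop hz]
    exact hf _ _
  exact ((continuous_cubePrepend_cubeDrop _ _).continuousOn.congr hfx).continuousAt
    ((isOpen_subcube _).mem_nhds (hc.mem_subcube x))

theorem exists_homeomorph_isRearrangement [Finite T] (hc : ClassifiesSubcubes c β)
    (hc' : ClassifiesSubcubes c' β')
    (hf : ∀ t y, f (cubePrepend A (β t) y) = cubePrepend A (β' t) y) :
    ∃ H : (∀ k, ℕ → A k) ≃ₜ (∀ k, ℕ → A k), ⇑H = f ∧ IsRearrangement A H := by
  set g := fun x => cubePrepend A (β (c' x)) (cubeDrop (β' (c' x)) x)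
  have hg : ∀ t y, g (cubePrepend A (β' t) y) = cubePrepend A (β t) y := fun t y => by
    have : c' (cubePrepend A (β' t) y) = t :=
      hc'.mem_subcube_iff.1 (cubePrepend_mem_subcube _ y)
    simp only [g, this, cubeDrop_cubePrepend]
  have hfg (x) : f (g x) = x := by
    rw [hf, cubePrepend_cubeDrop (hc'.mem_subcube x)]
  have hgf (x) : g (f x) = x := by
    rw [← cubePrepend_cubeDrop (hc.mem_subcube x), hf, hg]
  obtain ⟨m, ⟨e⟩⟩ := Finite.exists_equiv_fin T
  refine ⟨⟨⟨f, g, hgf, hfg⟩, hc.continuous hf, hc'.continuous hg⟩, rfl,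
    m, β ∘ e.symm, β' ∘ e.symm, ?_, ?_, ?_, ?_, fun a y => hf _ y⟩
  · exact (e.symm.surjective.iUnion_comp fun t => subcube A (β t)).trans hc.iUnion_eq_univ
  · exact fun a b hab => hc.pairwise_disjoint (e.symm.injective.ne hab)
  · exact (e.symm.surjective.iUnion_comp fun t => subcube A (β' t)).trans hc'.iUnion_eq_univ
  · exact fun a b hab => hc'.pairwise_disjoint (e.symm.injective.ne hab)

end ClassifiesSubcubes

end Classifier

section Prefixes

variable {n : ℕ} (G : SimpleGraph (Fin n)) (i : Fin n)

instance : Finite (raagIdx G) := inferInstanceAs (Finite (Fin n ⊕ ncP G))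

abbrev PairsAt : Type := {p : ncP G // i ∈ (p : Sym2 (Fin n))}

abbrev PairSymbols : Type := ∀ p : PairsAt G i, raagAlph G (Sum.inr p.1)

instance : Finite (PairSymbols G i) :=
  @Pi.finite _ _ Subtype.finite fun p => inferInstanceAs (Finite (Option {v // v ∈ p.1.1}))

def symbolI : PairSymbols G i := fun p => some ⟨i, p.2⟩

def symAt (m : ℕ) (x : raagCube G) : PairSymbols G i := fun p => x (Sum.inr p.1) m

def binCoord (x : raagCube G) : ℕ → Bool := x (Sum.inl i)

def cubePrefix (α : List Bool) (w : ∀ p : PairsAt G i, List (raagAlph G (Sum.inr p.1))) :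
    ∀ k, List (raagAlph G k)
  | Sum.inl j => if j = i then α else []
  | Sum.inr p => if h : i ∈ (p : Sym2 (Fin n)) then w ⟨p, h⟩ else []

def headPrefix (f : PairSymbols G i) : ∀ k, List (raagAlph G k) :=
  cubePrefix G i [] fun p => [f p]

def markedPrefix (α : List Bool) (g : PairSymbols G i) : ∀ k, List (raagAlph G k) :=
  cubePrefix G i α fun p => [symbolI G i p, g p]

variable {G i} {α : List Bool} {w : ∀ p : PairsAt G i, List (raagAlph G (Sum.inr p.1))}
  {x : raagCube G}

/-- `x (Sum.inl i)` is a sequence in `raagAlph G (Sum.inl i)`, which is `Bool` only up to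
unfolding; rewriting to `binCoord` lets the lemmas about `Bool` apply. -/
@[simp] theorem beginsWith_inl_iff :
    beginsWith α (x (Sum.inl i)) ↔ beginsWith α (binCoord G i x) :=
  Iff.rfl

theorem mem_subcube_cubePrefix :
    x ∈ subcube (raagAlph G) (cubePrefix G i α w) ↔
      beginsWith α (x (Sum.inl i)) ∧ ∀ p : PairsAt G i, beginsWith (w p) (x (Sum.inr p.1)) := by
  constructor
  · intro hx
    refine ⟨?_, fun p => ?_⟩
    · have hi := hx (Sum.inl i)
      simp only [cubePrefix] at hi
      exact hi
    · simpa [cubePrefix, p.2] using hx (Sum.inr p.1)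
  · rintro ⟨hi, hp⟩ (j | p)
    · by_cases hj : j = i
      · subst hj
        show beginsWith (if j = j then α else []) _
        rwa [if_pos rfl]
      · simp [cubePrefix, hj, beginsWith_nil]
    · by_cases h : i ∈ (p : Sym2 (Fin n))
      · simpa [cubePrefix, h] using hp ⟨p, h⟩
      · simp [cubePrefix, h, beginsWith_nil]

theorem Lmap_cubePrepend_cubePrefix (β : List Bool) (y : raagCube G) :
    Lmap G i β (cubePrepend (raagAlph G) (cubePrefix G i α w) y) =
      cubePrepend (raagAlph G) (cubePrefix G i (β ++ α) w) y := by
  funext k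
  rcases k with j | p
  · by_cases hj : j = i
    · subst hj
      simp only [Lmap, cubePrepend, cubePrefix, if_pos]
      exact (prependSeq_append β α _).symm
    · simp [Lmap, cubePrepend, cubePrefix, hj]
  · rfl

theorem Ldrop_cubePrepend_cubePrefix {m : ℕ} (hm : m ≤ α.length) (y : raagCube G) :
    Ldrop G i m (cubePrepend (raagAlph G) (cubePrefix G i α w) y) =
      cubePrepend (raagAlph G) (cubePrefix G i (α.drop m) w) y := by
  funext k
  rcases k with j | p
  · by_cases hj : j = i
    · subst hj
      simp only [Ldrop, cubePrepend, cubePrefix, if_pos]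
      exact prependSeq_shift hm _
    · simp [Ldrop, cubePrepend, cubePrefix, hj]
  · rfl

theorem Fmap_cubePrepend_cubePrefix (y : raagCube G) :
    Fmap G i (cubePrepend (raagAlph G) (cubePrefix G i α w) y) =
      cubePrepend (raagAlph G) (cubePrefix G i α fun p => symbolI G i p :: w p) y := by
  funext k
  rcases k with j | p
  · rfl
  · by_cases h : i ∈ (p : Sym2 (Fin n))
    · simp only [Fmap, cubePrepend, cubePrefix, h, dif_pos, symbolI, ← prependSeq_append]
      rfl
    · simp [Fmap, cubePrepend, cubePrefix, h]

theorem Fdrop_cubePrepend_cubePrefix (hw : ∀ p, w p ≠ []) (y : raagCube G) :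
    Fdrop G i (cubePrepend (raagAlph G) (cubePrefix G i α w) y) =
      cubePrepend (raagAlph G) (cubePrefix G i α fun p => (w p).tail) y := by
  funext k
  rcases k with j | p
  · rfl
  · by_cases h : i ∈ (p : Sym2 (Fin n))
    · have hm : 1 ≤ (w ⟨p, h⟩).length := List.length_pos_iff.2 (hw _)
      simp [Fdrop, cubePrepend, cubePrefix, h, prependSeq_shift hm]
    · simp [Fdrop, cubePrepend, cubePrefix, h]

theorem mem_subcube_headPrefix {f : PairSymbols G i} :
    x ∈ subcube (raagAlph G) (headPrefix G i f) ↔ symAt G i 0 x = f := by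
  rw [headPrefix, mem_subcube_cubePrefix]
  refine (and_iff_right (beginsWith_nil _)).trans ?_
  simp [beginsWith_cons, beginsWith_nil, funext_iff, symAt]

theorem mem_subcube_markedPrefix {g : PairSymbols G i} :
    x ∈ subcube (raagAlph G) (markedPrefix G i α g) ↔
      beginsWith α (x (Sum.inl i)) ∧ symAt G i 0 x = symbolI G i ∧ symAt G i 1 x = g := by
  simp [markedPrefix, mem_subcube_cubePrefix, beginsWith_cons, beginsWith_nil, funext_iff, symAt,
    forall_and]

theorem mem_Scube_iff : x ∈ Scube G i ↔ symAt G i 0 x = symbolI G i := by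
  simp [Scube, funext_iff, symAt, symbolI]

theorem Sii_eq : Sii G i = subcube (raagAlph G) (markedPrefix G i [] (symbolI G i)) := by
  have hS : Scube G i = subcube (raagAlph G) (headPrefix G i (symbolI G i)) := by
    ext; rw [mem_Scube_iff, mem_subcube_headPrefix]
  rw [Sii, hS]
  exact image_subcube_of_cubePrepend fun y => Fmap_cubePrepend_cubePrefix y

theorem mem_Sii_iff_s10 :
    x ∈ Sii G i ↔ symAt G i 0 x = symbolI G i ∧ symAt G i 1 x = symbolI G i := by
  rw [Sii_eq, mem_subcube_markedPrefix]
  exact and_iff_right (beginsWith_nil _)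

end Prefixes

section Pieces

variable {n : ℕ} (G : SimpleGraph (Fin n)) (i : Fin n)

open Classical in
noncomputable def domainIndex (x : raagCube G) : Fin 5 :=
  if x ∉ Scube G i then 0
  else if x ∈ Sii G i then 1
  else if beginsWith [true] (x (Sum.inl i)) then 2
  else if beginsWith [false, true] (x (Sum.inl i)) then 3 else 4

open Classical in
noncomputable def rangeIndex (x : raagCube G) : Fin 5 :=
  if x ∉ Scube G i then 3
  else if x ∈ Sii G i then 1
  else if beginsWith [true, false] (x (Sum.inl i)) then 0
  else if beginsWith [true, true] (x (Sum.inl i)) then 2 else 4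

noncomputable def pairKey (x : raagCube G) : PairSymbols G i :=
  open Classical in if x ∈ Scube G i then symAt G i 1 x else symAt G i 0 x

/-- `(a, f)` indexes the subcube of the `a`-th piece on which `pairKey` is `f`; the piece `S_ii`
(index `1`) is a single subcube, with key `symbolI`, and no other piece meets that key. -/
abbrev SubcubeIndex : Type := {t : Fin 5 × PairSymbols G i // t.2 = symbolI G i ↔ t.1 = 1}

def domainPrefix (t : Fin 5 × PairSymbols G i) : ∀ k, List (raagAlph G k) :=
  ![headPrefix G i t.2, markedPrefix G i [] t.2, markedPrefix G i [true] t.2,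
    markedPrefix G i [false, true] t.2, markedPrefix G i [false, false] t.2] t.1

def rangePrefix (t : Fin 5 × PairSymbols G i) : ∀ k, List (raagAlph G k) :=
  ![markedPrefix G i [true, false] t.2, markedPrefix G i [] t.2,
    markedPrefix G i [true, true] t.2, headPrefix G i t.2, markedPrefix G i [false] t.2] t.1

theorem pairKey_eq_symbolI_iff_domainIndex (x : raagCube G) :
    pairKey G i x = symbolI G i ↔ domainIndex G i x = 1 := by
  unfold pairKey domainIndex
  split_ifs <;> simp_all [mem_Scube_iff, mem_Sii_iff_s10]

theorem pairKey_eq_symbolI_iff_rangeIndex (x : raagCube G) :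
    pairKey G i x = symbolI G i ↔ rangeIndex G i x = 1 := by
  unfold pairKey rangeIndex
  split_ifs <;> simp_all [mem_Scube_iff, mem_Sii_iff_s10]

noncomputable def domainClass (x : raagCube G) : SubcubeIndex G i :=
  ⟨(domainIndex G i x, pairKey G i x), pairKey_eq_symbolI_iff_domainIndex G i x⟩

noncomputable def rangeClass (x : raagCube G) : SubcubeIndex G i :=
  ⟨(rangeIndex G i x, pairKey G i x), pairKey_eq_symbolI_iff_rangeIndex G i x⟩

theorem classifiesSubcubes_domain :
    ClassifiesSubcubes (domainClass G i) fun t => domainPrefix G i t.1 := by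
  rintro ⟨⟨a, f⟩, hf⟩
  ext x
  simp only [Set.mem_preimage, Set.mem_singleton_iff, domainClass, Subtype.ext_iff, Prod.ext_iff]
  have hS := mem_Scube_iff (i := i) (x := x)
  have hSii := mem_Sii_iff_s10 (i := i) (x := x)
  unfold domainIndex pairKey
  -- both sides only see whether `symAt 0 x`, `symAt 1 x` are `symbolI` and the first two bits
  by_cases h0 : symAt G i 0 x = symbolI G i <;> by_cases h1 : symAt G i 1 x = symbolI G i <;>
    cases hb0 : binCoord G i x 0 <;> cases hb1 : binCoord G i x 1 <;>
    fin_cases a <;> simp_all [domainPrefix, mem_subcube_headPrefix, mem_subcube_markedPrefix,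
      beginsWith_cons, beginsWith_nil, eq_comm (a := symbolI G i)]

theorem classifiesSubcubes_range :
    ClassifiesSubcubes (rangeClass G i) fun t => rangePrefix G i t.1 := by
  rintro ⟨⟨a, f⟩, hf⟩
  ext x
  simp only [Set.mem_preimage, Set.mem_singleton_iff, rangeClass, Subtype.ext_iff, Prod.ext_iff]
  have hS := mem_Scube_iff (i := i) (x := x)
  have hSii := mem_Sii_iff_s10 (i := i) (x := x)
  unfold rangeIndex pairKey
  by_cases h0 : symAt G i 0 x = symbolI G i <;> by_cases h1 : symAt G i 1 x = symbolI G i <;>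
    cases hb0 : binCoord G i x 0 <;> cases hb1 : binCoord G i x 1 <;>
    fin_cases a <;> simp_all [rangePrefix, mem_subcube_headPrefix, mem_subcube_markedPrefix,
      beginsWith_cons, beginsWith_nil, eq_comm (a := symbolI G i)]

def domainPieces : Fin 5 → Set (raagCube G) :=
  ![(Scube G i)ᶜ, Sii G i,
    (Scube G i \ Sii G i) ∩ Cset G i [true],
    (Scube G i \ Sii G i) ∩ Cset G i [false, true],
    (Scube G i \ Sii G i) ∩ Cset G i [false, false]]

def rangePieces : Fin 5 → Set (raagCube G) :=
  ![(Scube G i \ Sii G i) ∩ Cset G i [true, false], Sii G i,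
    (Scube G i \ Sii G i) ∩ Cset G i [true, true],
    (Scube G i)ᶜ,
    (Scube G i \ Sii G i) ∩ Cset G i [false]]

theorem domainPieces_eq_preimage (a : Fin 5) :
    domainPieces G i a = domainIndex G i ⁻¹' {a} := by
  ext x
  have hSii : x ∈ Sii G i → x ∈ Scube G i := fun h => mem_Scube_iff.2 (mem_Sii_iff_s10.1 h).1
  unfold domainIndex
  cases hb0 : binCoord G i x 0 <;> cases hb1 : binCoord G i x 1 <;>
    by_cases hS : x ∈ Scube G i <;> by_cases hS' : x ∈ Sii G i <;>
    fin_cases a <;> simp_all [domainPieces, Cset, beginsWith_cons, beginsWith_nil]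

theorem rangePieces_eq_preimage (a : Fin 5) :
    rangePieces G i a = rangeIndex G i ⁻¹' {a} := by
  ext x
  have hSii : x ∈ Sii G i → x ∈ Scube G i := fun h => mem_Scube_iff.2 (mem_Sii_iff_s10.1 h).1
  unfold rangeIndex
  cases hb0 : binCoord G i x 0 <;> cases hb1 : binCoord G i x 1 <;>
    by_cases hS : x ∈ Scube G i <;> by_cases hS' : x ∈ Sii G i <;>
    fin_cases a <;> simp_all [rangePieces, Cset, beginsWith_cons, beginsWith_nil]

noncomputable def hmapBranch : Fin 5 → raagCube G → raagCube G :=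
  ![Lmap G i [true, false] ∘ Fmap G i, id, Lmap G i [true], Fdrop G i ∘ Ldrop G i 2,
    Ldrop G i 1]

theorem hmap_eq_hmapBranch (x : raagCube G) :
    hmap G i x = hmapBranch G i (domainIndex G i x) x := by
  unfold hmap domainIndex
  split_ifs <;> rfl

theorem hmap_cubePrepend_domainPrefix (t : SubcubeIndex G i) (y : raagCube G) :
    hmap G i (cubePrepend (raagAlph G) (domainPrefix G i t.1) y) =
      cubePrepend (raagAlph G) (rangePrefix G i t.1) y := by
  have ht := (classifiesSubcubes_domain G i).mem_subcube_iff.1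
    (cubePrepend_mem_subcube (domainPrefix G i t.1) y)
  rw [hmap_eq_hmapBranch, show domainIndex G i _ = t.1.1 from congrArg (·.1.1) ht]
  obtain ⟨⟨a, f⟩, -⟩ := t
  fin_cases a <;>
    simp [hmapBranch, domainPrefix, rangePrefix, headPrefix, markedPrefix,
      Lmap_cubePrepend_cubePrefix, Fmap_cubePrepend_cubePrefix, Ldrop_cubePrepend_cubePrefix,
      Fdrop_cubePrepend_cubePrefix]

end Pieces

/-- The five domain pieces and five range pieces of the definition of `h_i` are
partitions of `X` into finite unions of subcubes, and `h_i` is a rearrangement. -/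
theorem hmap_pieces_partition_and_rearrangement (G : SimpleGraph (Fin n)) (i : Fin n) :
    (let D : Fin 5 → Set (raagCube G) :=
      ![(Scube G i)ᶜ, Sii G i,
        (Scube G i \ Sii G i) ∩ Cset G i [true],
        (Scube G i \ Sii G i) ∩ Cset G i [false, true],
        (Scube G i \ Sii G i) ∩ Cset G i [false, false]]
    let R : Fin 5 → Set (raagCube G) :=
      ![(Scube G i \ Sii G i) ∩ Cset G i [true, false], Sii G i,
        (Scube G i \ Sii G i) ∩ Cset G i [true, true],
        (Scube G i)ᶜ,
        (Scube G i \ Sii G i) ∩ Cset G i [false]]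
    (⋃ a, D a) = Set.univ ∧ (∀ a b, a ≠ b → Disjoint (D a) (D b)) ∧
    (⋃ a, R a) = Set.univ ∧ (∀ a b, a ≠ b → Disjoint (R a) (R b)) ∧
    (∀ a, FinUnionSubcubes (raagAlph G) (D a)) ∧
    (∀ a, FinUnionSubcubes (raagAlph G) (R a)) ∧
    (∀ a, hmap G i '' D a = R a)) ∧
    ∃ H : raagCube G ≃ₜ raagCube G,
      ⇑H = hmap G i ∧ IsRearrangement (raagAlph G) H := by
  have hD := classifiesSubcubes_domain G i
  have hR := classifiesSubcubes_range G i
  have hprefix := hmap_cubePrepend_domainPrefix G i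
  refine ⟨?_, hD.exists_homeomorph_isRearrangement hR hprefix⟩
  intro D R
  have hD_eq : D = fun a => domainIndex G i ⁻¹' {a} := funext (domainPieces_eq_preimage G i)
  have hR_eq : R = fun a => rangeIndex G i ⁻¹' {a} := funext (rangePieces_eq_preimage G i)
  rw [hD_eq, hR_eq]
  exact ⟨Set.iUnion_eq_univ_iff.2 fun x => ⟨_, rfl⟩, pairwise_disjoint_fiber _,
    Set.iUnion_eq_univ_iff.2 fun x => ⟨_, rfl⟩, pairwise_disjoint_fiber _,
    hD.finUnionSubcubes_preimage (·.1.1), hR.finUnionSubcubes_preimage (·.1.1),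
    hD.image_preimage hR hprefix (·.1.1)⟩
end

section
/- With the paper's construction: if g_i and g_j do not commute in A_Γ (i.e. {i,j} ∈ P), then S_j ⊆ X ∖ S_i, and consequently h_i(S_j) ⊆ S_i⁺ = S_i ∩ C_i(1) and h_i⁻¹(S_j) ⊆ S_i⁻ = S_i ∩ C_i(0). -/
variable {n : ℕ}

variable {G : SimpleGraph (Fin n)} {i j : Fin n} {x : raagCube G}

lemma beginsWith_singleton_iff {A : Type*} {a : A} {x : ℕ → A} :
    beginsWith [a] x ↔ x 0 = a := by
  refine ⟨fun ⟨y, hy⟩ => by rw [hy]; rfl, fun h => ⟨fun m => x (m + 1), ?_⟩⟩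
  funext k
  cases k <;> simp [prependSeq, h]

lemma mem_Cset_singleton_iff {b : Bool} :
    x ∈ Cset G i [b] ↔ x (Sum.inl i) 0 = b :=
  beginsWith_singleton_iff

lemma Scube_disjoint_of_mem_ncP (p : ncP G) (hi : i ∈ (p : Sym2 (Fin n)))
    (hj : j ∈ (p : Sym2 (Fin n))) (hne : i ≠ j) :
    Disjoint (Scube G i) (Scube G j) :=
  Set.disjoint_left.2 fun _ hxi hxj =>
    hne (congrArg Subtype.val (Option.some.inj ((hxi p hi).symm.trans (hxj p hj))))

lemma Lmap_mem_Scube_iff {α : List Bool} :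
    Lmap G i α x ∈ Scube G j ↔ x ∈ Scube G j :=
  Iff.rfl

lemma hmap_mem_Scube_inter_Cset_of_not_mem (hx : x ∉ Scube G i) :
    hmap G i x ∈ Scube G i ∩ Cset G i [true] := by
  have hh : hmap G i x = Lmap G i [true, false] (Fmap G i x) := if_pos hx
  rw [hh, Set.mem_inter_iff, Lmap_mem_Scube_iff, mem_Cset_singleton_iff]
  refine ⟨fun p hp => ?_, by simp only [Lmap, ↓reduceIte]; rfl⟩
  simp only [Fmap, hp, ↓reduceDIte]
  rfl

/-- On `S_i`, `h_i` can only leave `S_i` through its last two pieces, both inside `C_i(0)`. -/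
lemma mem_Cset_false_of_hmap_not_mem (hx : x ∈ Scube G i)
    (hhx : hmap G i x ∉ Scube G i) : x ∈ Cset G i [false] := by
  have hxS : ¬x ∉ Scube G i := not_not_intro hx
  by_cases hxii : x ∈ Sii G i
  · exact absurd hx (by rwa [hmap, if_neg hxS, if_pos hxii] at hhx)
  by_cases hx1 : beginsWith [true] (x (Sum.inl i))
  · rw [hmap, if_neg hxS, if_neg hxii, if_pos hx1, Lmap_mem_Scube_iff] at hhx
    exact absurd hx hhx
  exact mem_Cset_singleton_iff.2 <|
    Bool.eq_false_iff.2 fun h => hx1 (beginsWith_singleton_iff.2 h)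

/-- If `g_i` and `g_j` do not commute then `S_j ⊆ X ∖ S_i`, and consequently
`h_i(S_j) ⊆ S_i⁺ = S_i ∩ C_i(1)` and `h_i⁻¹(S_j) ⊆ S_i⁻ = S_i ∩ C_i(0)`. -/
theorem hmap_noncommuting_pair (G : SimpleGraph (Fin n)) (i j : Fin n)
    (hij : ¬ Commute (raagGen G i) (raagGen G j)) :
    Scube G j ⊆ (Scube G i)ᶜ ∧
    hmap G i '' Scube G j ⊆ Scube G i ∩ Cset G i [true] ∧
    hmap G i ⁻¹' (Scube G j) ⊆ Scube G i ∩ Cset G i [false] := by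
  have hne : i ≠ j := by rintro rfl; exact hij (Commute.refl _)
  have hdisj : Disjoint (Scube G i) (Scube G j) :=
    Scube_disjoint_of_mem_ncP ⟨s(i, j), i, j, rfl, hij⟩ (Sym2.mem_mk_left i j)
      (Sym2.mem_mk_right i j) hne
  have hji : Scube G j ⊆ (Scube G i)ᶜ := hdisj.subset_compl_left
  refine ⟨hji, ?_, fun x hx => ?_⟩
  · rintro _ ⟨x, hxj, rfl⟩
    exact hmap_mem_Scube_inter_Cset_of_not_mem (hji hxj)
  have hxi : x ∈ Scube G i := by
    by_contra hxi
    exact hji hx (hmap_mem_Scube_inter_Cset_of_not_mem hxi).1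
  exact ⟨hxi, mem_Cset_false_of_hmap_not_mem hxi (hji hx)⟩
end

section
/- Strengthened ping-pong conclusion: under the hypotheses of the ping-pong lemma for right-angled Artin groups, if U is any subset of X ∖ ⋃ᵢ S_i such that g_i(U) ⊆ S_i⁺ and g_i⁻¹(U) ⊆ S_i⁻ for all i, then the sets {g(U) : g ∈ A_Γ} are pairwise disjoint for distinct elements g of A_Γ. -/
/-!
Write a nontrivial element `k` of the group as a word in the generators that is reduced in the
sense of right-angled Artin groups: no letter cancels against an inverse letter that can be
shuffled next to it through commuting letters. Pulling out every copy of the first letter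
`s_i^{±1}` that can be shuffled to the front gives `k = s_i^{±(m+1)} k'`, where the word of `k'`
is shorter and has no letter with index `i` in front. By induction `k'(U) ⊆ S_j` for some `s_j`
in front of `k'`; then `s_i^{±1}` either commutes with `s_j`, preserves `S_j` and `s_j` is in
front of `k`, or maps `S_j` into `S_i^±`, which it preserves. So `k(U)` lies in some `S_j` and
misses `U`, and translating by `g` separates `g(U)` from `(g k)(U)`.

Words are shuffled along the `commutingGraph` of the generators, so the defining graph never has
to be identified with it.
-/

open Set

namespace RAAGPingPong

variable {ι : Type*}

section Words

variable {H : Type*} [Group H] (f : ι → H)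

def letterVal (x : ι × Bool) : H := cond x.2 (f x.1) (f x.1)⁻¹

def wordVal (L : List (ι × Bool)) : H := (L.map (letterVal f)).prod

@[simp]
lemma wordVal_nil : wordVal f [] = 1 := rfl

@[simp]
lemma wordVal_cons (x : ι × Bool) (L : List (ι × Bool)) :
    wordVal f (x :: L) = letterVal f x * wordVal f L :=
  List.prod_cons

lemma map_wordVal {K : Type*} [Group K] (φ : H →* K) (L : List (ι × Bool)) :
    φ (wordVal f L) = wordVal (fun i => φ (f i)) L := by
  induction L with
  | nil => simp
  | cons x L ih => rcases x with ⟨i, _ | _⟩ <;> simp [letterVal, ih]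

lemma exists_wordVal_eq {g : H} (hg : g ∈ Subgroup.closure (range f)) :
    ∃ L, wordVal f L = g := by
  classical
  rw [← FreeGroup.range_lift_eq_closure] at hg
  obtain ⟨z, rfl⟩ := hg
  exact ⟨z.toWord, FreeGroup.lift_mk.symm.trans (by rw [FreeGroup.mk_toWord])⟩

lemma commute_letterVal {x y : ι × Bool} (h : Commute (f x.1) (f y.1)) :
    Commute (letterVal f x) (letterVal f y) := by
  rcases x with ⟨i, _ | _⟩ <;> rcases y with ⟨j, _ | _⟩
  exacts [h.inv_inv, h.inv_left, h.inv_right, h]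

lemma letterVal_mul_letterVal_not (i : ι) (b : Bool) :
    letterVal f (i, b) * letterVal f (i, !b) = 1 := by
  cases b <;> simp [letterVal]

end Words

def commutingGraph {M : Type*} [Mul M] (f : ι → M) : SimpleGraph ι where
  Adj i j := i ≠ j ∧ Commute (f i) (f j)
  symm := ⟨fun _ _ h => ⟨h.1.symm, h.2.symm⟩⟩
  loopless := ⟨fun _ h => h.1 rfl⟩

variable (Γ : SimpleGraph ι)

/-- `HeadErase Γ x L L'`: the letter `x` can be shuffled to the front of `L` past letters whose
indices are `Γ`-adjacent to its own, and `L'` is what remains of `L` once it is removed. -/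
inductive HeadErase (x : ι × Bool) : List (ι × Bool) → List (ι × Bool) → Prop
  | head (L : List (ι × Bool)) : HeadErase x (x :: L) L
  | cons {y : ι × Bool} {L L' : List (ι × Bool)} :
      Γ.Adj x.1 y.1 → HeadErase x L L' → HeadErase x (y :: L) (y :: L')

def IsHead (x : ι × Bool) (L : List (ι × Bool)) : Prop :=
  ∃ L', HeadErase Γ x L L'

inductive IsReducible : List (ι × Bool) → Prop
  | cancel {i : ι} {b : Bool} {L : List (ι × Bool)} :
      IsHead Γ (i, !b) L → IsReducible ((i, b) :: L)
  | cons (y : ι × Bool) {L : List (ι × Bool)} : IsReducible L → IsReducible (y :: L)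

variable {Γ}

namespace HeadErase

variable {x : ι × Bool} {L L' : List (ι × Bool)}

lemma length_eq (h : HeadErase Γ x L L') : L.length = L'.length + 1 := by
  induction h with
  | head => rfl
  | cons _ _ ih => simp [ih]

lemma wordVal_eq {H : Type*} [Group H] {f : ι → H}
    (hf : ∀ i j, Γ.Adj i j → Commute (f i) (f j)) (h : HeadErase Γ x L L') :
    wordVal f L = letterVal f x * wordVal f L' := by
  induction h with
  | head => rfl
  | cons hxy _ ih =>
    rw [wordVal_cons, wordVal_cons, ih, ← mul_assoc, ← mul_assoc,
      (commute_letterVal f (hf _ _ hxy)).eq]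

lemma isHead_of_isHead (h : HeadErase Γ x L L') {z : ι × Bool} (hxz : Γ.Adj x.1 z.1)
    (hz : IsHead Γ z L') : IsHead Γ z L := by
  induction h with
  | head => exact ⟨_, .cons hxz.symm hz.choose_spec⟩
  | cons _ _ ih =>
    obtain ⟨M, hM⟩ := hz
    cases hM with
    | head => exact ⟨_, .head _⟩
    | cons hzy hM =>
      obtain ⟨M', hM'⟩ := ih ⟨_, hM⟩
      exact ⟨_, .cons hzy hM'⟩

lemma isReducible_of_isReducible (h : HeadErase Γ x L L') (hL' : IsReducible Γ L') :
    IsReducible Γ L := by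
  induction h with
  | head => exact .cons _ hL'
  | cons hxy hL ih =>
    cases hL' with
    | cancel hy => exact .cancel (hL.isHead_of_isHead hxy hy)
    | cons _ hL' => exact .cons _ (ih hL')

lemma isReducible_of_isHead_not {i : ι} {b : Bool} (h : HeadErase Γ (i, b) L L')
    (hL' : IsHead Γ (i, !b) L') : IsReducible Γ L := by
  induction h with
  | head => exact .cancel hL'
  | cons hy _ ih =>
    obtain ⟨M, hM⟩ := hL'
    cases hM with
    | head => exact (Γ.irrefl hy).elim
    | cons _ hM => exact .cons _ (ih ⟨_, hM⟩)

end HeadErase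

section Reduction

variable {H : Type*} [Group H] {f : ι → H} (hf : ∀ i j, Γ.Adj i j → Commute (f i) (f j))
include hf

lemma IsReducible.exists_length_lt_wordVal_eq {L : List (ι × Bool)} (h : IsReducible Γ L) :
    ∃ L', L'.length < L.length ∧ wordVal f L' = wordVal f L := by
  induction h with
  | @cancel i b L hL =>
    obtain ⟨L', hL'⟩ := hL
    refine ⟨L', by simp [hL'.length_eq], ?_⟩
    rw [wordVal_cons, hL'.wordVal_eq hf, ← mul_assoc, letterVal_mul_letterVal_not, one_mul]
  | cons y _ ih =>
    obtain ⟨L', hlen, hval⟩ := ih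
    exact ⟨y :: L', by simpa using hlen, by rw [wordVal_cons, wordVal_cons, hval]⟩

lemma exists_not_isReducible_wordVal_eq (L : List (ι × Bool)) :
    ∃ L', ¬IsReducible Γ L' ∧ wordVal f L' = wordVal f L := by
  by_cases h : IsReducible Γ L
  · obtain ⟨L', hlen, hval⟩ := h.exists_length_lt_wordVal_eq hf
    obtain ⟨L'', hL'', hval'⟩ := exists_not_isReducible_wordVal_eq L'
    exact ⟨L'', hL'', hval'.trans hval⟩
  · exact ⟨L, h, rfl⟩
termination_by L.length

lemma exists_wordVal_eq_pow_mul {L L' : List (ι × Bool)} {i : ι} {b : Bool}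
    (hL : ¬IsReducible Γ L) (h : HeadErase Γ (i, b) L L') :
    ∃ (m : ℕ) (L₂ : List (ι × Bool)),
      wordVal f L = letterVal f (i, b) ^ (m + 1) * wordVal f L₂ ∧ ¬IsReducible Γ L₂ ∧
      L₂.length < L.length ∧ (∀ c, ¬IsHead Γ (i, c) L₂) ∧
      ∀ z, Γ.Adj i z.1 → IsHead Γ z L₂ → IsHead Γ z L := by
  have hL' : ¬IsReducible Γ L' := fun hL' => hL (h.isReducible_of_isReducible hL')
  have hlen := h.length_eq
  by_cases hb : IsHead Γ (i, b) L'
  · obtain ⟨L'', h'⟩ := hb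
    obtain ⟨m, L₂, hval, hred, hlen₂, hnone, hlift⟩ := exists_wordVal_eq_pow_mul hL' h'
    refine ⟨m + 1, L₂, ?_, hred, by omega, hnone,
      fun z hz hzL => h.isHead_of_isHead hz (hlift z hz hzL)⟩
    rw [h.wordVal_eq hf, hval, ← mul_assoc, ← pow_succ']
  · refine ⟨0, L', by rw [h.wordVal_eq hf, zero_add, pow_one], hL', by omega, ?_,
      fun z hz hzL => h.isHead_of_isHead hz hzL⟩
    intro c hc
    rcases Bool.eq_or_eq_not c b with rfl | rfl
    exacts [hb hc, hL (h.isReducible_of_isHead_not hc)]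
termination_by L.length

end Reduction

section PingPong

variable {X : Type*} {f : ι → Equiv.Perm X} (hf : ∀ i j, Γ.Adj i j → Commute (f i) (f j))
  {P : ι × Bool → Set X} {S : ι → Set X} {U : Set X}
  (hPS : ∀ x, P x ⊆ S x.1)
  (hU : ∀ x, MapsTo ⇑(letterVal f x) U (P x))
  (hP : ∀ x, MapsTo ⇑(letterVal f x) (P x) (P x))
  (hadj : ∀ x j, Γ.Adj x.1 j → MapsTo ⇑(letterVal f x) (S j) (S j))
  (hnadj : ∀ x j, x.1 ≠ j → ¬Γ.Adj x.1 j → MapsTo ⇑(letterVal f x) (S j) (P x))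
include hf hPS hU hP hadj hnadj

theorem exists_isHead_mapsTo_wordVal (L : List (ι × Bool)) (hL : ¬IsReducible Γ L)
    (hne : L ≠ []) : ∃ j c, IsHead Γ (j, c) L ∧ MapsTo ⇑(wordVal f L) U (S j) := by
  obtain ⟨⟨i, b⟩, L', rfl⟩ := List.exists_cons_of_ne_nil hne
  have hhead : IsHead Γ (i, b) ((i, b) :: L') := ⟨L', .head L'⟩
  obtain ⟨m, L₂, hval, hred, hlen, hnone, hlift⟩ := exists_wordVal_eq_pow_mul hf hL (.head L')
  have hpow {W : Set X} (hW : MapsTo ⇑(letterVal f (i, b)) W (P (i, b))) :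
      MapsTo ⇑(letterVal f (i, b) ^ (m + 1)) W (S i) := by
    rw [pow_succ, Equiv.Perm.coe_mul, Equiv.Perm.coe_pow]
    exact (((hP _).iterate m).comp hW).mono_right (hPS _)
  rw [hval, Equiv.Perm.coe_mul]
  by_cases hL₂ : L₂ = []
  · subst hL₂
    exact ⟨i, b, hhead, (hpow (hU _)).comp (mapsTo_id U)⟩
  obtain ⟨j, c, hjc, hj⟩ := exists_isHead_mapsTo_wordVal L₂ hred hL₂
  have hij : i ≠ j := fun hij => hnone c (hij ▸ hjc)
  by_cases hcomm : Γ.Adj i j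
  · refine ⟨j, c, hlift _ hcomm hjc, MapsTo.comp ?_ hj⟩
    rw [Equiv.Perm.coe_pow]
    exact (hadj _ j hcomm).iterate _
  · exact ⟨i, b, hhead, (hpow (hnadj _ j hij hcomm)).comp hj⟩
termination_by L.length

end PingPong

lemma mapsTo_letterVal {X : Type*} (f : ι → Equiv.Perm X) (x : ι × Bool) {Ap Am Bp Bm : Set X}
    (h : ⇑(f x.1) '' Ap ⊆ Bp ∧ ⇑(f x.1)⁻¹ '' Am ⊆ Bm) :
    MapsTo ⇑(letterVal f x) (cond x.2 Ap Am) (cond x.2 Bp Bm) := by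
  rcases x with ⟨i, _ | _⟩
  exacts [mapsTo_iff_image_subset.2 h.2, mapsTo_iff_image_subset.2 h.1]

lemma mapsTo_letterVal_of_image_eq {X : Type*} (f : ι → Equiv.Perm X) (x : ι × Bool) {A : Set X}
    (h : ⇑(f x.1) '' A = A) : MapsTo ⇑(letterVal f x) A A := by
  have hinv : ⇑(f x.1)⁻¹ '' A = A := (Equiv.eq_image_iff_symm_image_eq _ _ _).1 h.symm
  simpa using mapsTo_letterVal f x ⟨h.subset, hinv.subset⟩

lemma disjoint_image_of_forall_ne_one {H X : Type*} [Group H] (φ : H →* Equiv.Perm X)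
    {U : Set X} (h : ∀ k ≠ 1, Disjoint U (φ k '' U)) {g g' : H} (hne : g ≠ g') :
    Disjoint (φ g '' U) (φ g' '' U) := by
  have := (disjoint_image_iff (φ g).injective).2 (h (g⁻¹ * g') (by simpa [inv_mul_eq_one]))
  rwa [← image_comp, ← Equiv.Perm.coe_mul, ← map_mul, mul_inv_cancel_left] at this

end RAAGPingPong

open RAAGPingPong in
theorem raag_ping_pong_disjoint_general {n : ℕ} (G : SimpleGraph (Fin n)) {X : Type*}
    (φ : RAAG G →* Equiv.Perm X)
    (Sp Sm S : Fin n → Set X) (hS : ∀ i, S i = Sp i ∪ Sm i)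
    (h1 : ∀ i, ⇑(φ (raagGen G i)) '' Sp i ⊆ Sp i ∧
      ⇑(φ (raagGen G i))⁻¹ '' Sm i ⊆ Sm i)
    (h2 : ∀ i j, i ≠ j → Commute (raagGen G i) (raagGen G j) →
      ⇑(φ (raagGen G i)) '' S j = S j)
    (h3 : ∀ i j, ¬ Commute (raagGen G i) (raagGen G j) →
      ⇑(φ (raagGen G i)) '' S j ⊆ Sp i ∧ ⇑(φ (raagGen G i))⁻¹ '' S j ⊆ Sm i)
    (U : Set X) (hU : U ⊆ (⋃ i, S i)ᶜ)
    (hU2 : ∀ i, ⇑(φ (raagGen G i)) '' U ⊆ Sp i ∧ ⇑(φ (raagGen G i))⁻¹ '' U ⊆ Sm i) :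
    ∀ g h : RAAG G, g ≠ h → Disjoint (⇑(φ g) '' U) (⇑(φ h) '' U) := by
  set Γ := commutingGraph (raagGen G)
  set f : Fin n → Equiv.Perm X := fun i => φ (raagGen G i)
  refine fun g h => disjoint_image_of_forall_ne_one φ fun k hk => ?_
  obtain ⟨L₀, rfl⟩ := exists_wordVal_eq (raagGen G) (g := k)
    (PresentedGroup.closure_range_of (raagRels G) ▸ Subgroup.mem_top k)
  obtain ⟨L, hL, hval⟩ := exists_not_isReducible_wordVal_eq (Γ := Γ) (fun _ _ h => h.2) L₀
  have hne : L ≠ [] := by rintro rfl; exact hk hval.symm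
  obtain ⟨j, -, -, hj⟩ := exists_isHead_mapsTo_wordVal (Γ := Γ) (f := f) (fun _ _ h => h.2.map φ)
    (fun x => by rw [hS]; cases x.2 <;> simp)
    (fun x => by simpa using mapsTo_letterVal f x (hU2 x.1))
    (fun x => mapsTo_letterVal f x (h1 x.1))
    (fun x j hij => mapsTo_letterVal_of_image_eq f x (h2 _ _ hij.1 hij.2))
    (fun x j hij hnadj => by
      simpa using mapsTo_letterVal f x (h3 x.1 j fun hc => hnadj ⟨hij, hc⟩))
    L hL hne
  rw [← hval, map_wordVal]
  exact disjoint_of_subset_left hU (disjoint_compl_left_iff_subset.2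
    ((mapsTo_iff_image_subset.1 hj).trans (subset_iUnion S j)))

/-- Strengthened ping-pong conclusion: the translates of `U` are pairwise disjoint. -/
theorem raag_ping_pong_disjoint {n : ℕ} (G : SimpleGraph (Fin n)) {X : Type*}
    (φ : RAAG G →* Equiv.Perm X)
    (Sp Sm S : Fin n → Set X) (hS : ∀ i, S i = Sp i ∪ Sm i)
    (h1 : ∀ i, ⇑(φ (raagGen G i)) '' Sp i ⊆ Sp i ∧
      ⇑(φ (raagGen G i))⁻¹ '' Sm i ⊆ Sm i)
    (h2 : ∀ i j, i ≠ j → Commute (raagGen G i) (raagGen G j) →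
      ⇑(φ (raagGen G i)) '' S j = S j)
    (h3 : ∀ i j, ¬ Commute (raagGen G i) (raagGen G j) →
      ⇑(φ (raagGen G i)) '' S j ⊆ Sp i ∧ ⇑(φ (raagGen G i))⁻¹ '' S j ⊆ Sm i)
    (U : Set X) (hUne : U.Nonempty) (hU : U ⊆ (⋃ i, S i)ᶜ)
    (hU2 : ∀ i, ⇑(φ (raagGen G i)) '' U ⊆ Sp i ∧ ⇑(φ (raagGen G i))⁻¹ '' U ⊆ Sm i) :
    ∀ g h : RAAG G, g ≠ h → Disjoint (⇑(φ g) '' U) (⇑(φ h) '' U) :=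
  raag_ping_pong_disjoint_general G φ Sp Sm S hS h1 h2 h3 U hU hU2
end
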